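/- arXiv:1011.0311 — 9 statements merged into one kernel-verified Lean document; each statement's English description precedes it below -/
import Mathlib

section
/- For all real F, a, s with F ≥ |a| > 0, the inequality |a·cos(s) / (F + √(F² − a²)·sin(s))| ≤ 1 holds. -/
/-- For real `F, a, s` with `F ≥ |a| > 0`,
`|a·cos s / (F + √(F² − a²)·sin s)| ≤ 1`. -/
theorem abs_cos_div_le_one (F a s : ℝ) (ha : a ≠ 0) (hFa : |a| ≤ F) :
    |a * Real.cos s / (F + Real.sqrt (F ^ 2 - a ^ 2) * Real.sin s)| ≤ 1 := by
  set b := Real.sqrt (F ^ 2 - a ^ 2) with hb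
  have ha2 : 0 < a ^ 2 := by positivity
  have haF : a ^ 2 ≤ F ^ 2 := by nlinarith [abs_nonneg a, sq_abs a]
  have hbnn : 0 ≤ b := Real.sqrt_nonneg _
  have hb2 : b ^ 2 = F ^ 2 - a ^ 2 := Real.sq_sqrt (by linarith)
  have hF : 0 < F := lt_of_lt_of_le (abs_pos.mpr ha) hFa
  have hbF : b < F := by nlinarith
  have hsin := Real.neg_one_le_sin s
  have hsin' := Real.sin_le_one s
  have hpos : 0 < F + b * Real.sin s := by nlinarith
  have hpyth := Real.sin_sq_add_cos_sq s
  rw [abs_div, div_le_one (abs_pos.mpr (ne_of_gt hpos)), abs_of_pos hpos]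
  rw [abs_le]
  constructor <;> nlinarith [sq_nonneg (b + F * Real.sin s), sq_nonneg (a * Real.cos s)]
end

section
/- For every β with 0 ≤ β < 1 and every real a with a ∉ ℤ, and for every integer j, one has ∑_{n ∈ ℤ} β^{|n+j|}/|n − a| ≤ 1/dist(a, ℤ) + 2 + 6·|log(1 − β)|. -/
/-!
Let `k` be the integer nearest to `a`. The term `n = k` contributes at most `1 / dist(a, ℤ)`.
For `n ≠ k` we have `|n - a| ≥ |n - k| - 1/2`, and we compare with one of two log series:
if `|n + j| ≥ |n - k|`, the term is at most `2 β^|n-k| / |n-k|`; otherwise `|n - a| ≥ |n + j| + 1/2`,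
so the term is at most `β^|n+j| / |n+j|` (or `2` when `n + j = 0`). Summing over `ℤ` with
`∑ₘ β^|m| / |m| = 2L`, `L = -log (1 - β)`, gives `1 / dist(a, ℤ) + 2 · 2L + 2L + 2`.
-/

open Real

/-- Vanishes at `m = 0`, since division by zero is zero. -/
noncomputable def powDivAbs (β : ℝ) (m : ℤ) : ℝ := β ^ m.natAbs / |(m : ℝ)|

lemma powDivAbs_neg (β : ℝ) (m : ℤ) : powDivAbs β (-m) = powDivAbs β m := by
  simp [powDivAbs]

lemma powDivAbs_natCast_add_one (β : ℝ) (n : ℕ) :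
    powDivAbs β (n + 1) = β ^ (n + 1) / (n + 1) := by
  rw [powDivAbs, abs_of_nonneg (by positivity)]
  norm_cast

lemma hasSum_powDivAbs {β : ℝ} (hβ : |β| < 1) :
    HasSum (powDivAbs β) (-2 * log (1 - β)) := by
  have h := hasSum_pow_div_log_of_abs_lt_one hβ
  simp_rw [← powDivAbs_natCast_add_one] at h
  convert h.of_add_one_of_neg_add_one (by simpa only [powDivAbs_neg] using h) using 1
  simp only [powDivAbs, Int.natAbs_zero, pow_zero, Int.cast_zero, abs_zero, div_zero, add_zero]
  ring

lemma abs_sub_sub_le_abs_sub {x : ℝ} {k : ℤ} (hk : |x - k| ≤ 1 / 2) (n : ℤ) :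
    |(n : ℝ) - k| - 1 / 2 ≤ |n - x| := by
  have := abs_sub_le (n : ℝ) x k
  linarith

section

variable {β x : ℝ} {k n m : ℤ}

lemma pow_div_abs_sub_le_of_le (hβ0 : 0 ≤ β) (hβ1 : β ≤ 1) (hk : |x - k| ≤ 1 / 2)
    (hn : n ≠ k) (hnm : (n - k).natAbs ≤ m.natAbs) :
    β ^ m.natAbs / |(n : ℝ) - x| ≤ 2 * powDivAbs β (n - k) := by
  have hnk : (1 : ℝ) ≤ |(n : ℝ) - k| := by exact_mod_cast Int.one_le_abs (sub_ne_zero.mpr hn)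
  have hdist := abs_sub_sub_le_abs_sub hk n
  calc β ^ m.natAbs / |(n : ℝ) - x| ≤ β ^ (n - k).natAbs / (|(n : ℝ) - k| / 2) :=
        div_le_div₀ (by positivity) (pow_le_pow_of_le_one hβ0 hβ1 hnm) (by positivity)
          (by linarith)
    _ = 2 * powDivAbs β (n - k) := by
        rw [powDivAbs, div_div_eq_mul_div]; push_cast; ring

lemma pow_div_abs_sub_le_of_lt (hβ0 : 0 ≤ β) (hk : |x - k| ≤ 1 / 2)
    (hmn : m.natAbs < (n - k).natAbs) :
    β ^ m.natAbs / |(n : ℝ) - x| ≤ powDivAbs β m + if m = 0 then 2 else 0 := by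
  have hdist : |(m : ℝ)| + 1 / 2 ≤ |(n : ℝ) - x| := by
    have : |m| + 1 ≤ |n - k| := by rw [← Int.natCast_natAbs, ← Int.natCast_natAbs]; omega
    have : |(m : ℝ)| + 1 ≤ |(n : ℝ) - k| := by exact_mod_cast this
    linarith [abs_sub_sub_le_abs_sub hk n]
  split_ifs with hm
  · subst hm
    simp only [powDivAbs, Int.natAbs_zero, pow_zero, Int.cast_zero, abs_zero, div_zero,
      zero_add] at hdist ⊢
    rw [div_le_iff₀ (by linarith)]
    linarith
  · rw [add_zero, powDivAbs]
    exact div_le_div_of_nonneg_left (by positivity) (by positivity) (by linarith)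

lemma pow_div_abs_sub_le (hβ0 : 0 ≤ β) (hβ1 : β ≤ 1) (hk : |x - k| ≤ 1 / 2) (m n : ℤ) :
    β ^ m.natAbs / |(n : ℝ) - x| ≤ (if n = k then 1 / |x - k| else 0) +
      2 * powDivAbs β (n - k) + powDivAbs β m + if m = 0 then 2 else 0 := by
  have hpos : ∀ m, 0 ≤ powDivAbs β m := fun m ↦ by unfold powDivAbs; positivity
  by_cases hn : n = k
  · subst hn
    rw [if_pos rfl, abs_sub_comm]
    have := div_le_div_of_nonneg_right (pow_le_one₀ hβ0 hβ1 (n := m.natAbs)) (abs_nonneg (x - n))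
    split_ifs <;> linarith [hpos (n - n), hpos m]
  rw [if_neg hn, zero_add]
  rcases le_or_gt (n - k).natAbs m.natAbs with hnm | hmn
  · have := pow_div_abs_sub_le_of_le hβ0 hβ1 hk hn hnm
    split_ifs <;> linarith [hpos m]
  · have := pow_div_abs_sub_le_of_lt hβ0 hk hmn
    linarith [hpos (n - k)]

end

theorem sum_beta_div_abs_le_general (β a : ℝ) (hβ0 : 0 ≤ β) (hβ1 : β < 1)
    (j : ℤ) :
    ∑' n : ℤ, β ^ (n + j).natAbs / |(n : ℝ) - a|
      ≤ 1 / |a - round a| + 2 + 6 * |Real.log (1 - β)| := by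
  set k := round a
  have hL := hasSum_powDivAbs (abs_lt.mpr ⟨by linarith, hβ1⟩)
  have hbound : HasSum (fun n : ℤ ↦ (if n = k then 1 / |a - k| else 0) +
      2 * powDivAbs β (n - k) + powDivAbs β (n + j) + if n + j = 0 then 2 else 0)
      (1 / |a - k| + 2 * (-2 * log (1 - β)) + -2 * log (1 - β) + 2) := by
    refine (((hasSum_ite_eq k _).add (((Equiv.subRight k).hasSum_iff.mpr hL).mul_left 2)).add
      ((Equiv.addRight j).hasSum_iff.mpr hL)).add ?_
    simpa only [add_eq_zero_iff_eq_neg] using hasSum_ite_eq (-j) (2 : ℝ)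
  have hterm := fun n : ℤ ↦ pow_div_abs_sub_le hβ0 hβ1.le (abs_sub_round a) (n + j) n
  have hsum : Summable fun n : ℤ ↦ β ^ (n + j).natAbs / |(n : ℝ) - a| :=
    hbound.summable.of_nonneg_of_le (fun n ↦ by positivity) hterm
  have hlog : |log (1 - β)| = -log (1 - β) :=
    abs_of_nonpos (log_nonpos (by linarith) (by linarith))
  linarith [hasSum_le hterm hsum.hasSum hbound]

/-- For `0 ≤ β < 1`, `a ∉ ℤ` and any integer `j`,
`∑_{n ∈ ℤ} β^{|n+j|}/|n − a| ≤ 1/dist(a,ℤ) + 2 + 6·|log(1−β)|`,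
where `dist(a,ℤ) = |a − round a|`. -/
theorem sum_beta_div_abs_le (β a : ℝ) (hβ0 : 0 ≤ β) (hβ1 : β < 1)
    (ha : ∀ k : ℤ, a ≠ k) (j : ℤ) :
    ∑' n : ℤ, β ^ (n + j).natAbs / |(n : ℝ) - a|
      ≤ 1 / |a - round a| + 2 + 6 * |Real.log (1 - β)| :=
  sum_beta_div_abs_le_general β a hβ0 hβ1 j
end

section
/- For every β with 0 ≤ β < 1, every integer a, and every integer j, one has ∑_{n ∈ ℤ, n ≠ a} β^{|n+j|}/|n − a| ≤ 1 + 3·|log(1 − β)|. -/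
open Finset

private theorem exch (β : ℝ) (hβ0 : 0 ≤ β) (hβ1 : β ≤ 1) {r s : ℕ} (hr : 1 ≤ r) (hs : 1 ≤ s) :
    β ^ r / s + β ^ s / r ≤ β ^ r / r + β ^ s / s := by
  have hr' : (0:ℝ) < r := by exact_mod_cast hr
  have hs' : (0:ℝ) < s := by exact_mod_cast hs
  rw [div_eq_mul_one_div (β ^ r) (s:ℝ), div_eq_mul_one_div (β ^ s) (r:ℝ),
    div_eq_mul_one_div (β ^ r) (r:ℝ), div_eq_mul_one_div (β ^ s) (s:ℝ)]
  rcases le_total r s with h | h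
  · have h1 : β ^ s ≤ β ^ r := pow_le_pow_of_le_one hβ0 hβ1 h
    have h2 : (1:ℝ)/s ≤ 1/r := one_div_le_one_div_of_le hr' (by exact_mod_cast h)
    nlinarith [mul_nonneg (sub_nonneg.2 h1) (sub_nonneg.2 h2)]
  · have h1 : β ^ r ≤ β ^ s := pow_le_pow_of_le_one hβ0 hβ1 h
    have h2 : (1:ℝ)/r ≤ 1/s := one_div_le_one_div_of_le hs' (by exact_mod_cast h)
    nlinarith [mul_nonneg (sub_nonneg.2 h1) (sub_nonneg.2 h2)]

private theorem reflsum (β : ℝ) (hβ0 : 0 ≤ β) (hβ1 : β ≤ 1) (N : ℕ) :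
    ∑ i ∈ range N, β ^ (N - i) / ((i+1 : ℕ) : ℝ)
      ≤ ∑ i ∈ range N, β ^ (i+1) / ((i+1 : ℕ) : ℝ) := by
  have key : ∀ i ∈ range N, β ^ (N - i) / ((i+1:ℕ):ℝ) + β ^ (i+1) / ((N-i:ℕ):ℝ)
      ≤ β ^ (i+1) / ((i+1:ℕ):ℝ) + β ^ (N - i) / ((N-i:ℕ):ℝ) := by
    intro i hi
    rw [mem_range] at hi
    have := exch β hβ0 hβ1 (r := i+1) (s := N-i) (by omega) (by omega)
    linarith
  have hrefl1 : ∑ i ∈ range N, β ^ (i+1) / ((N-i:ℕ):ℝ)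
      = ∑ i ∈ range N, β ^ (N-i) / ((i+1:ℕ):ℝ) := by
    rw [← Finset.sum_range_reflect (fun j => β ^ (N - j) / ((j+1:ℕ):ℝ)) N]
    apply Finset.sum_congr rfl
    intro i hi; rw [mem_range] at hi
    rw [show N - (N-1-i) = i+1 by omega, show N-1-i+1 = N-i by omega]
  have hrefl2 : ∑ i ∈ range N, β ^ (N-i) / ((N-i:ℕ):ℝ)
      = ∑ i ∈ range N, β ^ (i+1) / ((i+1:ℕ):ℝ) := by
    rw [← Finset.sum_range_reflect (fun j => β ^ (j+1) / ((j+1:ℕ):ℝ)) N]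
    apply Finset.sum_congr rfl
    intro i hi; rw [mem_range] at hi
    rw [show N-1-i+1 = N-i by omega]
  have h := Finset.sum_le_sum key
  rw [Finset.sum_add_distrib, Finset.sum_add_distrib, hrefl1, hrefl2] at h
  linarith

private theorem keyZ (β : ℝ) (hβ0 : 0 ≤ β) (hβ1 : β < 1) (d : ℕ) :
    ∑' m : ℤ, (if m = 0 then (0:ℝ) else β ^ (m + d).natAbs / |(m:ℝ)|)
      ≤ 1 + 3 * (-Real.log (1 - β)) := by
  set L : ℝ := -Real.log (1 - β) with hLdef
  have hL0 : 0 ≤ L := by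
    have := Real.log_nonpos (by linarith) (by linarith : (1:ℝ) - β ≤ 1)
    simp only [hLdef]; linarith
  set F : ℤ → ℝ := fun m => if m = 0 then (0:ℝ) else β ^ (m + d).natAbs / |(m:ℝ)| with hF
  have hlogsum : HasSum (fun n : ℕ => β ^ (n+1) / (n+1)) L :=
    Real.hasSum_pow_div_log_of_abs_lt_one (x := β) (by rwa [abs_of_nonneg hβ0])
  -- positive side
  have hposfun : (fun n : ℕ => F (↑(n+1))) = fun n : ℕ => β ^ d * (β ^ (n+1) / (n+1)) := by
    funext n
    have h1 : ((↑(n+1) : ℤ)) ≠ 0 := by exact_mod_cast Nat.succ_ne_zero n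
    have h2 : ((↑(n+1) : ℤ) + d).natAbs = (n + 1) + d := by omega
    simp only [hF, if_neg h1, h2]
    rw [show ((↑(n+1):ℤ):ℝ) = (n:ℝ)+1 by push_cast; ring,
      abs_of_nonneg (by positivity : (0:ℝ) ≤ (n:ℝ)+1), pow_add,
      mul_comm (β ^ (n+1)) (β ^ d), mul_div_assoc]
  have hFnat : HasSum (fun n : ℕ => F ↑n) (β ^ d * L) := by
    have h1 : HasSum (fun n : ℕ => F (↑(n+1))) (β ^ d * L) := by
      rw [hposfun]; exact hlogsum.mul_left _
    have h2 := (hasSum_nat_add_iff (f := fun n : ℕ => F ↑n) 1).mp h1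
    simpa [hF] using h2
  -- negative side
  have hnegfun : ∀ n : ℕ, F (-(↑n+1)) = β ^ ((d:ℤ) - (n+1)).natAbs / ((n:ℝ)+1) := by
    intro n
    have h0 : (-((n:ℤ)+1) : ℤ) ≠ 0 := by omega
    simp only [hF]
    rw [if_neg h0, show (-((n:ℤ)+1)) + d = (d:ℤ) - (n+1) by ring]
    congr 1
    push_cast
    rw [abs_neg, abs_of_nonneg (by positivity)]
  set g : ℕ → ℝ := fun n => F (-(↑n+1)) with hg
  have hgval : ∀ n : ℕ, g (n + d) = β ^ (n+1) / ((n:ℝ) + d + 1) := by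
    intro n
    simp only [hg]
    rw [hnegfun (n+d),
      show ((d:ℤ) - (↑(n+d)+1)) = -((n:ℤ)+1) by push_cast; ring,
      show (-((n:ℤ)+1)).natAbs = n+1 by omega]
    push_cast; ring_nf
  have hgnonneg : ∀ n : ℕ, 0 ≤ g n := by
    intro n; simp only [hg]; rw [hnegfun n]; positivity
  have hgsum : Summable g := by
    rw [← summable_nat_add_iff d]
    apply Summable.of_nonneg_of_le (fun n => by rw [hgval n]; positivity)
      (fun n => ?_) (summable_geometric_of_lt_one hβ0 hβ1)
    rw [hgval n]
    calc β ^ (n+1) / ((n:ℝ) + d + 1) ≤ β ^ (n+1) := by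
          apply div_le_self (by positivity)
          have := Nat.cast_nonneg (α := ℝ) n
          have := Nat.cast_nonneg (α := ℝ) d
          linarith
      _ ≤ β ^ n := pow_le_pow_of_le_one hβ0 hβ1.le (by omega)
  -- assemble
  have htot := tsum_of_nat_of_neg_add_one (f := F) hFnat.summable
    (by simpa [hg] using hgsum)
  rw [htot, hFnat.tsum_eq]
  -- bound tail of g
  have hgshift : Summable fun n => g (n + d) := (summable_nat_add_iff d).mpr hgsum
  have htail : ∑' n : ℕ, g (n + d) ≤ L := by
    rw [← hlogsum.tsum_eq]
    apply Summable.tsum_le_tsum ?_ hgshift hlogsum.summable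
    intro n
    rw [hgval n]
    apply div_le_div_of_nonneg_left (by positivity) (by positivity)
    have := Nat.cast_nonneg (α := ℝ) d
    linarith
  -- head of g
  have hheadval : ∀ i ∈ range d, g i = β ^ (d - (i+1)) / ((i+1:ℕ):ℝ) := by
    intro i hi; rw [mem_range] at hi
    simp only [hg]
    rw [hnegfun i,
      show ((d:ℤ) - (↑i+1)) = ((d - (i+1) : ℕ) : ℤ) by omega,
      Int.natAbs_natCast]
    push_cast; ring_nf
  have hhead : ∑ i ∈ range d, g i ≤ 1 + L := by
    rcases Nat.eq_zero_or_pos d with hd0 | hd0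
    · simp [hd0]; linarith
    obtain ⟨N, rfl⟩ : ∃ N, d = N + 1 := ⟨d - 1, by omega⟩
    rw [Finset.sum_congr rfl hheadval, Finset.sum_range_succ]
    have hlast : β ^ (N + 1 - (N+1)) / ((N+1:ℕ):ℝ) ≤ 1 := by
      rw [show N + 1 - (N+1) = 0 by omega, pow_zero,
        div_le_one (by positivity)]
      exact_mod_cast Nat.one_le_iff_ne_zero.mpr (by omega)
    have hmain : ∑ i ∈ range N, β ^ (N + 1 - (i+1)) / ((i+1:ℕ):ℝ) ≤ L := by
      have h1 : ∑ i ∈ range N, β ^ (N + 1 - (i+1)) / ((i+1:ℕ):ℝ)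
          = ∑ i ∈ range N, β ^ (N - i) / ((i+1:ℕ):ℝ) := by
        apply Finset.sum_congr rfl; intro i hi; rw [mem_range] at hi
        rw [show N + 1 - (i+1) = N - i by omega]
      have h2 : ∑ i ∈ range N, β ^ (i+1) / ((i+1:ℕ):ℝ)
          = ∑ i ∈ range N, β ^ (i+1) / ((i:ℝ)+1) := by
        apply Finset.sum_congr rfl; intro i _; push_cast; ring_nf
      rw [h1]
      refine (reflsum β hβ0 hβ1.le N).trans ?_
      rw [h2, ← hlogsum.tsum_eq]
      exact Summable.sum_le_tsum (range N) (fun i _ => by positivity) hlogsum.summable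
    linarith
  -- total
  have hgsplit : ∑' n : ℕ, g n = ∑ i ∈ range d, g i + ∑' n : ℕ, g (n + d) :=
    (Summable.sum_add_tsum_nat_add d hgsum).symm
  have hQ : ∑' n : ℕ, g n ≤ 1 + 2 * L := by rw [hgsplit]; linarith
  have hP : β ^ d * L ≤ L := mul_le_of_le_one_left hL0 (pow_le_one₀ hβ0 hβ1.le)
  have hgg : ∑' n : ℕ, F (-(↑n+1)) = ∑' n : ℕ, g n := by simp only [hg]
  rw [hgg]
  linarith

/-- For `0 ≤ β < 1`, integers `a` and `j`,
`∑_{n ∈ ℤ, n ≠ a} β^{|n+j|}/|n − a| ≤ 1 + 3·|log(1−β)|`. -/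
theorem sum_beta_div_abs_int_le (β : ℝ) (hβ0 : 0 ≤ β) (hβ1 : β < 1) (a j : ℤ) :
    ∑' n : {n : ℤ // n ≠ a}, β ^ ((n : ℤ) + j).natAbs / |((n : ℤ) : ℝ) - (a : ℝ)|
      ≤ 1 + 3 * |Real.log (1 - β)| := by
  have habs : |Real.log (1 - β)| = -Real.log (1 - β) :=
    abs_of_nonpos (Real.log_nonpos (by linarith) (by linarith))
  rw [habs]
  set c : ℤ := a + j with hc
  set F : ℤ → ℝ := fun m => if m = 0 then (0:ℝ) else β ^ (m + c).natAbs / |(m:ℝ)| with hF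
  -- step A: reindex to ℤ
  have hstepA : ∑' n : {n : ℤ // n ≠ a}, β ^ ((n : ℤ) + j).natAbs / |((n : ℤ) : ℝ) - (a : ℝ)|
      = ∑' m : ℤ, F m := by
    have hinj : Function.Injective (fun n : {n : ℤ // n ≠ a} => (n:ℤ) - a) := by
      intro x y hxy
      simp only [sub_left_inj] at hxy
      exact Subtype.ext hxy
    have hsupp : Function.support F ⊆ Set.range (fun n : {n : ℤ // n ≠ a} => (n:ℤ) - a) := by
      intro m hm
      have hm0 : m ≠ 0 := by
        intro h; apply hm; simp [hF, h]
      exact ⟨⟨m + a, by omega⟩, by simp⟩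
    rw [← hinj.tsum_eq hsupp]
    apply tsum_congr
    intro n
    simp only [hF]
    rw [if_neg (sub_ne_zero.2 n.2)]
    rw [show ((n:ℤ) - a + c) = (n:ℤ) + j by rw [hc]; ring]
    congr 1
    push_cast
    ring_nf
  rw [hstepA]
  -- step B: sign of c
  rcases le_or_gt 0 c with hc0 | hc0
  · obtain ⟨d, hd⟩ : ∃ d : ℕ, c = (d:ℤ) := ⟨c.toNat, (Int.toNat_of_nonneg hc0).symm⟩
    have := keyZ β hβ0 hβ1 d
    rw [hF, hd]
    exact this
  · set d : ℕ := (-c).natAbs with hdd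
    have hcd : c = -(d:ℤ) := by simp only [hdd]; omega
    have hneg := (Equiv.neg ℤ).tsum_eq (f := F)
    rw [← hneg]
    have hcong : ∀ m : ℤ, F ((Equiv.neg ℤ) m)
        = (if m = 0 then (0:ℝ) else β ^ (m + d).natAbs / |(m:ℝ)|) := by
      intro m
      simp only [hF, Equiv.neg_apply, neg_eq_zero]
      rcases eq_or_ne m 0 with rfl | hm0
      · simp
      · rw [if_neg hm0, if_neg hm0]
        congr 1
        · congr 1
          rw [hcd]
          omega
        · push_cast
          rw [abs_neg]
    rw [tsum_congr hcong]
    exact keyZ β hβ0 hβ1 d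
end

section
/- Fix a > 0, b > 0, I > 0 and φ ∈ ℝ. Define r = (2/√b)(I + a/2 + √(I(I+a))·sin φ)^{1/2} and p_r = √(b·I(I+a))·cos φ / (I + a/2 + √(I(I+a))·sin φ)^{1/2}. Then (1/(2b))·(p_r² + (a/r − b r/2)²) = I. -/
/-!
Write `K = √(I(I+a))` and `S = I + a/2 + K sin φ`, so that `r² = 4S/b` and `p_r² = b K² cos²φ / S`.
Expanding the square, `(a/r - br/2)² = b (a²/(4S) - a + S)`. Since `K² = (I + a/2)² - a²/4`,
`K² cos²φ + a²/4 = (I + a/2)² - K² sin²φ = S (I + a/2 - K sin φ)`, hence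
`p_r² + (a/r - br/2)² = b ((I + a/2 - K sin φ) + (I + a/2 + K sin φ) - a) = 2bI`.
-/

open Real

lemma sqrt_mul_add_lt_add_half {a I : ℝ} (ha : 0 < a) (hI : 0 ≤ I) :
    √(I * (I + a)) < I + a / 2 :=
  (sqrt_lt' (by positivity)).mpr (by nlinarith)

lemma add_mul_sin_pos {c K : ℝ} (hK : 0 ≤ K) (hKc : K < c) (φ : ℝ) : 0 < c + K * sin φ := by
  nlinarith [neg_one_le_sin φ]

lemma two_div_sqrt_mul_sqrt_sq {b S : ℝ} (hb : 0 ≤ b) (hS : 0 ≤ S) :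
    (2 / √b * √S) ^ 2 = 4 * S / b := by
  rw [mul_pow, div_pow, sq_sqrt hb, sq_sqrt hS]
  ring

lemma div_sub_mul_div_two_sq {a b r : ℝ} (hr : r ≠ 0) :
    (a / r - b * r / 2) ^ 2 = a ^ 2 / r ^ 2 - a * b + b ^ 2 * r ^ 2 / 4 := by
  field_simp
  ring

lemma sqrt_mul_cos_div_sqrt_sq {A S : ℝ} (hA : 0 ≤ A) (hS : 0 ≤ S) (φ : ℝ) :
    (√A * cos φ / √S) ^ 2 = A * cos φ ^ 2 / S := by
  rw [div_pow, mul_pow, sq_sqrt hA, sq_sqrt hS]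

/-- Inversion formula for the action-angle transformation of the radial
Hamiltonian: with `r` and `p_r` given by the action-angle formulas,
`(1/(2b))·(p_r² + (a/r − b r/2)²) = I`. -/
theorem action_angle_inversion (a b I φ : ℝ) (ha : 0 < a) (hb : 0 < b) (hI : 0 < I) :
    let r := (2 / Real.sqrt b) *
      Real.sqrt (I + a / 2 + Real.sqrt (I * (I + a)) * Real.sin φ)
    let pr := Real.sqrt (b * I * (I + a)) * Real.cos φ /
      Real.sqrt (I + a / 2 + Real.sqrt (I * (I + a)) * Real.sin φ)
    (1 / (2 * b)) * (pr ^ 2 + (a / r - b * r / 2) ^ 2) = I := by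
  intro r pr
  set K := √(I * (I + a))
  set S := I + a / 2 + K * sin φ
  have hK : K ^ 2 = I * (I + a) := sq_sqrt (by positivity)
  have hS : 0 < S := add_mul_sin_pos (sqrt_nonneg _) (sqrt_mul_add_lt_add_half ha hI.le) φ
  have hr : r ^ 2 = 4 * S / b := two_div_sqrt_mul_sqrt_sq hb.le hS.le
  have hr0 : r ≠ 0 := by positivity
  have hpr : pr ^ 2 = b * I * (I + a) * cos φ ^ 2 / S :=
    sqrt_mul_cos_div_sqrt_sq (by positivity) hS.le φ
  rw [div_sub_mul_div_two_sq hr0, hpr, hr]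
  field_simp
  linear_combination 4 * sin φ ^ 2 * hK + 4 * I * (I + a) * sin_sq_add_cos_sq φ
end

section
/- For a > 0, b > 0, I > 0 and the turning points r₋ < r₊ defined by r_± = √(2/b)(√(I+a) ± √I), the action integral (1/π)∫_{r₋}^{r₊} (b/(2ρ))·√((r₊² − ρ²)(ρ² − r₋²)) dρ equals I = (b/8)(r₊ − r₋)². -/
/-!
Substituting `u = ρ²` turns the integrand into `√((R² - u)(u - r²)) / (2u)`, which has the
classical primitive `actionPrimitive r R` below. Between the turning points `u = r²` and `u = R²`
both of its arcsines run from `-1` to `1`, so the integral equals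
`(π/4)(R² + r² - 2rR) = (π/4)(R - r)²`. Finally `r₊ - r₋ = 2√(2I/b)`, so that
`(b/8)(r₊ - r₋)² = I`.
-/

open Real Set

theorem HasDerivAt.arcsin_of_sq_add_sq {f : ℝ → ℝ} {f' x s : ℝ} (hf : HasDerivAt f f' x)
    (hs : 0 < s) (h : f x ^ 2 + s ^ 2 = 1) :
    HasDerivAt (fun y => arcsin (f y)) (f' / s) x := by
  have hlt : f x ^ 2 < 1 := by nlinarith
  have hne : f x ≠ -1 ∧ f x ≠ 1 := by
    constructor <;> rintro heq <;> rw [heq] at hlt <;> norm_num at hlt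
  have hsqrt : √(1 - f x ^ 2) = s := by
    rw [show 1 - f x ^ 2 = s ^ 2 by linarith, sqrt_sq hs.le]
  simpa [hsqrt, div_eq_inv_mul, Function.comp_def] using
    (hasDerivAt_arcsin hne.1 hne.2).comp x hf

noncomputable def actionPrimitive (r R u : ℝ) : ℝ :=
  √((R ^ 2 - u) * (u - r ^ 2))
    + (R ^ 2 + r ^ 2) / 2 * arcsin ((2 * u - (R ^ 2 + r ^ 2)) / (R ^ 2 - r ^ 2))
    - r * R * arcsin (((R ^ 2 + r ^ 2) * u - 2 * (r * R) ^ 2) / (u * (R ^ 2 - r ^ 2)))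

section

variable {r R : ℝ}

theorem hasDerivAt_actionPrimitive (hr : 0 < r) (hrR : r < R) {u : ℝ}
    (hu : u ∈ Ioo (r ^ 2) (R ^ 2)) :
    HasDerivAt (actionPrimitive r R) (√((R ^ 2 - u) * (u - r ^ 2)) / u) u := by
  obtain ⟨hlo, hhi⟩ := hu
  have hu0 : 0 < u := (pow_pos hr 2).trans hlo
  have hR : 0 < R := hr.trans hrR
  have hd : 0 < R ^ 2 - r ^ 2 := by nlinarith
  have hP : 0 < (R ^ 2 - u) * (u - r ^ 2) := mul_pos (by linarith) (by linarith)
  obtain ⟨s, hs⟩ : ∃ s, s = √((R ^ 2 - u) * (u - r ^ 2)) := ⟨_, rfl⟩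
  have hs_pos : 0 < s := hs ▸ sqrt_pos.2 hP
  have hs_sq : s ^ 2 = (R ^ 2 - u) * (u - r ^ 2) := hs ▸ sq_sqrt hP.le
  rw [← hs]
  have hpoly : HasDerivAt (fun v => (R ^ 2 - v) * (v - r ^ 2)) (R ^ 2 + r ^ 2 - 2 * u) u :=
    (((hasDerivAt_id' u).const_sub (R ^ 2)).mul
      ((hasDerivAt_id' u).sub_const (r ^ 2))).congr_deriv (by ring)
  have hroot : HasDerivAt (fun v => √((R ^ 2 - v) * (v - r ^ 2)))
      ((R ^ 2 + r ^ 2 - 2 * u) / (2 * s)) u :=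
    hs ▸ hpoly.sqrt hP.ne'
  have hasin₁ : HasDerivAt (fun v => arcsin ((2 * v - (R ^ 2 + r ^ 2)) / (R ^ 2 - r ^ 2)))
      ((2 / (R ^ 2 - r ^ 2)) / (2 * s / (R ^ 2 - r ^ 2))) u := by
    refine HasDerivAt.arcsin_of_sq_add_sq ?_ (div_pos (by positivity) hd) ?_
    · exact ((((hasDerivAt_id' u).const_mul 2).sub_const (R ^ 2 + r ^ 2)).div_const
        (R ^ 2 - r ^ 2)).congr_deriv (by ring)
    · field_simp
      linear_combination 4 * hs_sq
  have hasin₂ : HasDerivAt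
      (fun v => arcsin (((R ^ 2 + r ^ 2) * v - 2 * (r * R) ^ 2) / (v * (R ^ 2 - r ^ 2))))
      ((2 * (r * R) ^ 2 / (u ^ 2 * (R ^ 2 - r ^ 2))) / (2 * (r * R) * s / (u * (R ^ 2 - r ^ 2))))
      u := by
    refine HasDerivAt.arcsin_of_sq_add_sq ?_ (div_pos (by positivity) (mul_pos hu0 hd)) ?_
    · refine ((((hasDerivAt_id' u).const_mul (R ^ 2 + r ^ 2)).sub_const (2 * (r * R) ^ 2)).div
        ((hasDerivAt_id' u).mul_const (R ^ 2 - r ^ 2)) (mul_ne_zero hu0.ne' hd.ne')).congr_deriv ?_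
      field_simp
      ring
    · field_simp
      linear_combination 4 * (r * R) ^ 2 * hs_sq
  refine ((hroot.add (hasin₁.const_mul ((R ^ 2 + r ^ 2) / 2))).sub
    (hasin₂.const_mul (r * R))).congr_deriv ?_
  field_simp
  linear_combination (-2) * hs_sq

theorem continuousOn_actionPrimitive (hr : 0 < r) (hrR : r < R) :
    ContinuousOn (actionPrimitive r R) {0}ᶜ := by
  have hd : R ^ 2 - r ^ 2 ≠ 0 := by nlinarith
  have hden : ∀ u ∈ ({0}ᶜ : Set ℝ), u * (R ^ 2 - r ^ 2) ≠ 0 :=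
    fun u hu => mul_ne_zero hu hd
  unfold actionPrimitive
  fun_prop (disch := assumption)

theorem actionPrimitive_sq_sub_actionPrimitive_sq (hr : 0 < r) (hrR : r < R) :
    actionPrimitive r R (R ^ 2) - actionPrimitive r R (r ^ 2) = π / 2 * (R - r) ^ 2 := by
  have hR : 0 < R := hr.trans hrR
  have hd : R ^ 2 - r ^ 2 ≠ 0 := by nlinarith
  have h₁ : (2 * R ^ 2 - (R ^ 2 + r ^ 2)) / (R ^ 2 - r ^ 2) = 1 := by
    rw [div_eq_one_iff_eq hd]; ring
  have h₂ : ((R ^ 2 + r ^ 2) * R ^ 2 - 2 * (r * R) ^ 2) / (R ^ 2 * (R ^ 2 - r ^ 2)) = 1 := by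
    rw [div_eq_one_iff_eq (by positivity)]; ring
  have h₃ : (2 * r ^ 2 - (R ^ 2 + r ^ 2)) / (R ^ 2 - r ^ 2) = -1 := by
    rw [div_eq_iff hd]; ring
  have h₄ :
      ((R ^ 2 + r ^ 2) * r ^ 2 - 2 * (r * R) ^ 2) / (r ^ 2 * (R ^ 2 - r ^ 2)) = -1 := by
    rw [div_eq_iff (by positivity)]; ring
  simp only [actionPrimitive, h₁, h₂, h₃, h₄, arcsin_one, arcsin_neg_one, sub_self, zero_mul,
    mul_zero, sqrt_zero]
  ring

theorem integral_sqrt_mul_div_self (hr : 0 < r) (hrR : r < R) :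
    ∫ ρ in r..R, √((R ^ 2 - ρ ^ 2) * (ρ ^ 2 - r ^ 2)) / ρ = π / 4 * (R - r) ^ 2 := by
  have hne : ∀ ρ ∈ Icc r R, ρ ≠ 0 := fun ρ hρ => (hr.trans_le hρ.1).ne'
  have hcont : ContinuousOn (fun ρ => actionPrimitive r R (ρ ^ 2) / 2) (Icc r R) :=
    ((continuousOn_actionPrimitive hr hrR).comp (continuous_pow 2).continuousOn
      fun ρ hρ => pow_ne_zero 2 (hne ρ hρ)).div_const 2
  have hderiv : ∀ ρ ∈ Ioo r R, HasDerivAt (fun ρ => actionPrimitive r R (ρ ^ 2) / 2)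
      (√((R ^ 2 - ρ ^ 2) * (ρ ^ 2 - r ^ 2)) / ρ) ρ := by
    rintro ρ ⟨hlo, hhi⟩
    have hu : ρ ^ 2 ∈ Ioo (r ^ 2) (R ^ 2) := ⟨by gcongr, by gcongr; linarith⟩
    have hsq : HasDerivAt (fun ρ : ℝ => ρ ^ 2) (2 * ρ) ρ := by simpa using hasDerivAt_pow 2 ρ
    refine ((HasDerivAt.comp (h := fun ρ : ℝ => ρ ^ 2) ρ (hasDerivAt_actionPrimitive hr hrR hu)
      hsq).div_const 2).congr_deriv ?_
    field_simp
  have hint : IntervalIntegrable (fun ρ => √((R ^ 2 - ρ ^ 2) * (ρ ^ 2 - r ^ 2)) / ρ)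
      MeasureTheory.volume r R := by
    refine ContinuousOn.intervalIntegrable ?_
    rw [uIcc_of_le hrR.le]
    exact ContinuousOn.div (by fun_prop) continuousOn_id hne
  rw [intervalIntegral.integral_eq_sub_of_hasDerivAt_of_le hrR.le hcont hderiv hint, ← sub_div,
    actionPrimitive_sq_sub_actionPrimitive_sq hr hrR]
  ring

end

/-- The action integral for the radial Hamiltonian:
`(1/π)∫_{r₋}^{r₊} (b/(2ρ))·√((r₊² − ρ²)(ρ² − r₋²)) dρ = (b/8)(r₊ − r₋)² = I`. -/
theorem action_integral (a b I : ℝ) (ha : 0 < a) (hb : 0 < b) (hI : 0 < I) :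
    let rp := Real.sqrt (2 / b) * (Real.sqrt (I + a) + Real.sqrt I)
    let rm := Real.sqrt (2 / b) * (Real.sqrt (I + a) - Real.sqrt I)
    (1 / Real.pi) * ∫ ρ in rm..rp,
        (b / (2 * ρ)) * Real.sqrt ((rp ^ 2 - ρ ^ 2) * (ρ ^ 2 - rm ^ 2))
      = (b / 8) * (rp - rm) ^ 2 ∧
    (b / 8) * (rp - rm) ^ 2 = I := by
  intro rp rm
  have hsqrt : √I < √(I + a) := sqrt_lt_sqrt hI.le (by linarith)
  have hscale : 0 < √(2 / b) := sqrt_pos.2 (by positivity)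
  have hrm : 0 < rm := mul_pos hscale (by linarith)
  have hrmp : rm < rp := mul_lt_mul_of_pos_left (by linarith [sqrt_pos.2 hI]) hscale
  have hwidth : (rp - rm) ^ 2 = 8 * I / b := by
    rw [show rp - rm = 2 * √(2 / b) * √I by ring, mul_pow, mul_pow, sq_sqrt (by positivity),
      sq_sqrt hI.le]
    ring
  constructor
  · simp_rw [show ∀ ρ : ℝ, b / (2 * ρ) * √((rp ^ 2 - ρ ^ 2) * (ρ ^ 2 - rm ^ 2))
        = b / 2 * (√((rp ^ 2 - ρ ^ 2) * (ρ ^ 2 - rm ^ 2)) / ρ) from fun ρ => by ring]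
    rw [intervalIntegral.integral_const_mul, integral_sqrt_mul_div_self hrm hrmp]
    field_simp
    ring
  · rw [hwidth]
    field_simp
end

section
/- For every x ≥ u > 0, ∫₀^{π/2} dt / (x − √(x² − u²)·cos t) = (2/u)·arctan((x + √(x² − u²))/u), and in particular this integral is at most π/u. -/
/-!
The Weierstrass substitution `s = tan (t / 2)` turns `1 / (a - b cos t)` into a rational function of `s`
whose primitive is an arctangent: when `a² = b² + c²` with `c ≠ 0`, the function
`(2 / c) arctan ((a + b) tan (t / 2) / c)` is a primitive of `1 / (a - b cos t)` on `(-π, π)`.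
With `a = x`, `b = √(x² - u²)`, `c = u` and `tan (π / 4) = 1` this gives the value of the integral,
and `arctan < π / 2` gives the bound.
-/

open Real Set

lemma sub_mul_cos_ne_zero {a b : ℝ} (hab : b ^ 2 < a ^ 2) (t : ℝ) : a - b * cos t ≠ 0 := by
  have h : |b * cos t| < |a| := by
    rw [abs_mul]
    calc |b| * |cos t| ≤ |b| := mul_le_of_le_one_right (abs_nonneg b) (abs_cos_le_one t)
      _ < |a| := sq_lt_sq.mp hab
  intro h0
  rw [sub_eq_zero.mp h0] at h
  exact lt_irrefl _ h

lemma hasDerivAt_arctan_mul_tan_half {a b c t : ℝ} (hc : c ≠ 0) (habc : a ^ 2 = b ^ 2 + c ^ 2)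
    (ht : cos (t / 2) ≠ 0) :
    HasDerivAt (fun s => 2 / c * arctan ((a + b) * tan (s / 2) / c)) (1 / (a - b * cos t)) t := by
  have htan : HasDerivAt (fun s => tan (s / 2)) (1 / cos (t / 2) ^ 2 * (1 / 2)) t :=
    HasDerivAt.comp (h₂ := tan) t (hasDerivAt_tan ht) ((hasDerivAt_id t).div_const 2)
  refine (((htan.const_mul (a + b)).div_const c).arctan.const_mul (2 / c)).congr_deriv ?_
  have hcos : cos t = cos (t / 2) ^ 2 - sin (t / 2) ^ 2 := by
    rw [← cos_two_mul', mul_div_cancel₀ t two_ne_zero]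
  have hden : a - b * cos t ≠ 0 := sub_mul_cos_ne_zero (by nlinarith [sq_pos_of_ne_zero hc]) t
  rw [hcos] at hden ⊢
  rw [tan_eq_sin_div_cos]
  field_simp
  linear_combination cos (t / 2) ^ 2 * habc - (a ^ 2 + a * b) * sin_sq_add_cos_sq (t / 2)

theorem integral_one_div_sub_mul_cos {a b c α β : ℝ} (hc : c ≠ 0) (habc : a ^ 2 = b ^ 2 + c ^ 2)
    (hα : α ∈ Ioo (-π) π) (hβ : β ∈ Ioo (-π) π) :
    ∫ t in α..β, 1 / (a - b * cos t) =
      2 / c * arctan ((a + b) * tan (β / 2) / c) - 2 / c * arctan ((a + b) * tan (α / 2) / c) := by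
  have hab : b ^ 2 < a ^ 2 := by nlinarith [sq_pos_of_ne_zero hc]
  have hderiv : ∀ t ∈ uIcc α β,
      HasDerivAt (fun s => 2 / c * arctan ((a + b) * tan (s / 2) / c)) (1 / (a - b * cos t)) t := by
    intro t ht
    obtain ⟨ht₁, ht₂⟩ := ordConnected_Ioo.uIcc_subset hα hβ ht
    exact hasDerivAt_arctan_mul_tan_half hc habc (cos_pos_of_mem_Ioo ⟨by linarith, by linarith⟩).ne'
  exact intervalIntegral.integral_eq_sub_of_hasDerivAt hderiv
    ((continuous_const.div (by fun_prop) (sub_mul_cos_ne_zero hab)).intervalIntegrable _ _)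

/-- For `x ≥ u > 0`,
`∫₀^{π/2} dt/(x − √(x² − u²) cos t) = (2/u)·arctan((x + √(x² − u²))/u)`,
and this is at most `π/u`. -/
theorem integral_Psi (x u : ℝ) (hu : 0 < u) (hxu : u ≤ x) :
    (∫ t in (0:ℝ)..(Real.pi / 2),
        1 / (x - Real.sqrt (x ^ 2 - u ^ 2) * Real.cos t))
      = (2 / u) * Real.arctan ((x + Real.sqrt (x ^ 2 - u ^ 2)) / u) ∧
    (∫ t in (0:ℝ)..(Real.pi / 2),
        1 / (x - Real.sqrt (x ^ 2 - u ^ 2) * Real.cos t))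
      ≤ Real.pi / u := by
  have hsq : x ^ 2 = √(x ^ 2 - u ^ 2) ^ 2 + u ^ 2 := by
    rw [sq_sqrt (by nlinarith)]; ring
  have hI := integral_one_div_sub_mul_cos hu.ne' hsq (α := 0) (β := π / 2)
    ⟨by linarith [pi_pos], pi_pos⟩ ⟨by linarith [pi_pos], by linarith [pi_pos]⟩
  rw [show π / 2 / 2 = π / 4 by ring, tan_pi_div_four, zero_div, tan_zero] at hI
  simp only [mul_one, mul_zero, zero_div, arctan_zero, sub_zero] at hI
  refine ⟨hI, hI ▸ ?_⟩
  calc 2 / u * arctan ((x + √(x ^ 2 - u ^ 2)) / u) ≤ 2 / u * (π / 2) := by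
        gcongr; exact (arctan_lt_pi_div_two _).le
    _ = π / u := by ring
end

section
/- For fixed a > 0 and x > a, the 2π-periodic function t ↦ a/(x − √(x² − a²)·cos t) has Fourier expansion ∑_{n ∈ ℤ} ((x − a)/(x + a))^{|n|/2} e^{int}; equivalently, its n-th Fourier coefficient (1/2π)∫₀^{2π} a·e^{−int}/(x − √(x² − a²) cos t) dt equals ((x−a)/(x+a))^{|n|/2}. -/
/-!
With `r = √((x - a) / (x + a))` one has `√(x² - a²) = r (x + a)`, and the integrand becomes the
Poisson kernel `(1 - r²) / (1 - 2 r cos t + r²)`. Splitting it as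
`1 / (1 - r e^{it}) + r e^{-it} / (1 - r e^{-it})` and expanding both geometric series gives the
absolutely convergent expansion `∑_{m ∈ ℤ} r^{|m|} e^{imt}`; integrating term by term against
`e^{-int}`, orthogonality of the exponentials leaves `2π r^{|n|}`.
-/

open Complex

theorem integral_exp_mul_I_mul_exp_neg_mul_I (m n : ℤ) :
    ∫ t in (0 : ℝ)..(2 * Real.pi), exp (m * I * t) * exp (-n * I * t) =
      if m = n then (2 * Real.pi : ℂ) else 0 := by
  have hexp : ∀ t : ℝ, exp (m * I * t) * exp (-n * I * t) = exp ((m - n : ℤ) * I * t) := by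
    intro t
    rw [← exp_add]
    push_cast
    ring_nf
  simp_rw [hexp]
  split_ifs with hmn
  · simp [hmn]
  · have hperiod : exp (((m - n : ℤ) : ℂ) * I * ↑(2 * Real.pi)) = 1 := by
      rw [← exp_int_mul_two_pi_mul_I (m - n)]
      push_cast
      ring_nf
    rw [integral_exp_mul_complex (by simp [sub_eq_zero, hmn]), hperiod, ofReal_zero, mul_zero,
      exp_zero, sub_self, zero_div]

theorem integral_tsum_mul_exp_mul_I_mul_exp_neg_mul_I (c : ℤ → ℂ) (hc : Summable fun m => ‖c m‖)
    (n : ℤ) :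
    ∫ t in (0 : ℝ)..(2 * Real.pi), (∑' m : ℤ, c m * exp (m * I * t)) * exp (-n * I * t) =
      2 * Real.pi * c n := by
  have hnorm : ∀ (m : ℤ) (t : ℝ), ‖c m * exp (m * I * t)‖ = ‖c m‖ := by
    intro m t
    rw [norm_mul, norm_exp]
    simp
  have hnorm' : ∀ (m : ℤ) (t : ℝ), ‖c m * (exp (m * I * t) * exp (-n * I * t))‖ = ‖c m‖ := by
    intro m t
    rw [← mul_assoc, norm_mul, hnorm, norm_exp]
    simp
  have hsum : HasSum (fun m => ∫ t in (0 : ℝ)..(2 * Real.pi),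
        c m * (exp (m * I * t) * exp (-n * I * t)))
      (∫ t in (0 : ℝ)..(2 * Real.pi), (∑' m : ℤ, c m * exp (m * I * t)) * exp (-n * I * t)) :=
    intervalIntegral.hasSum_integral_of_dominated_convergence (fun m _ => ‖c m‖)
      (fun m => (by fun_prop : Continuous _).aestronglyMeasurable)
      (fun m => .of_forall fun t _ => (hnorm' m t).le) (.of_forall fun _ _ => hc)
      intervalIntegrable_const
      (.of_forall fun t _ => by
        simpa only [mul_assoc] using
          (hc.of_norm_bounded fun m => (hnorm m t).le).hasSum.mul_right (exp (-n * I * t)))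
  have hcoeff : ∀ m : ℤ, ∫ t in (0 : ℝ)..(2 * Real.pi),
      c m * (exp (m * I * t) * exp (-n * I * t)) = if m = n then 2 * Real.pi * c n else 0 := by
    intro m
    rw [intervalIntegral.integral_const_mul, integral_exp_mul_I_mul_exp_neg_mul_I]
    split_ifs with hmn
    · rw [hmn, mul_comm]
    · exact mul_zero _
  exact hsum.unique ((hasSum_ite_eq n _).congr_fun hcoeff)

theorem summable_pow_natAbs {ρ : ℝ} (hρ : |ρ| < 1) : Summable fun m : ℤ => ρ ^ m.natAbs := by
  have hgeom := summable_geometric_of_abs_lt_one hρ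
  refine .of_nat_of_neg_add_one (hgeom.congr fun k => ?_) ((hgeom.mul_right ρ).congr fun k => ?_)
  · simp
  · rw [← pow_succ]
    congr 1

theorem hasSum_pow_natAbs_mul_exp {r : ℝ} (hr : |r| < 1) (t : ℝ) :
    HasSum (fun m : ℤ => (r : ℂ) ^ m.natAbs * exp (m * I * t))
      ((1 - r ^ 2) / (1 - 2 * r * Real.cos t + r ^ 2) : ℝ) := by
  set w := exp (t * I)
  set v := exp (-t * I)
  have hwv : w * v = 1 := by rw [← exp_add]; simp
  have hw : ‖(r : ℂ) * w‖ < 1 := by simpa [w, norm_exp] using hr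
  have hv : ‖(r : ℂ) * v‖ < 1 := by simpa [v, norm_exp] using hr
  have hw₀ : 1 - (r : ℂ) * w ≠ 0 := fun h => by simp [← sub_eq_zero.1 h] at hw
  have hv₀ : 1 - (r : ℂ) * v ≠ 0 := fun h => by simp [← sub_eq_zero.1 h] at hv
  have hsum : (((1 - r ^ 2) / (1 - 2 * r * Real.cos t + r ^ 2) : ℝ) : ℂ) =
      (1 - r * w)⁻¹ + (1 - r * v)⁻¹ * (r * v) := by
    have hden : 1 - 2 * r * Complex.cos t + (r : ℂ) ^ 2 = (1 - r * w) * (1 - r * v) := by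
      rw [Complex.cos]
      linear_combination (-(r : ℂ) ^ 2) * hwv
    push_cast
    rw [hden]
    field_simp
    linear_combination (r : ℂ) ^ 2 * hwv
  rw [hsum]
  refine .of_nat_of_neg_add_one ((hasSum_geometric_of_norm_lt_one hw).congr_fun fun k => ?_)
    (((hasSum_geometric_of_norm_lt_one hv).mul_right ((r : ℂ) * v)).congr_fun fun k => ?_)
  · rw [mul_pow, ← exp_nat_mul]
    simp only [Int.natAbs_natCast, Int.cast_natCast]
    ring_nf
  · rw [← pow_succ, mul_pow, ← exp_nat_mul]
    have hk : (-((k : ℤ) + 1)).natAbs = k + 1 := by omega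
    rw [hk]
    push_cast
    ring_nf

theorem div_sub_sqrt_mul_cos_eq {x a : ℝ} (hax : a ≤ x) (hxa : 0 < x + a) (t : ℝ) :
    a / (x - √(x ^ 2 - a ^ 2) * Real.cos t) =
      (1 - √((x - a) / (x + a)) ^ 2) /
        (1 - 2 * √((x - a) / (x + a)) * Real.cos t + √((x - a) / (x + a)) ^ 2) := by
  set r := √((x - a) / (x + a))
  have hr2 : r ^ 2 = (x - a) / (x + a) := Real.sq_sqrt (div_nonneg (by linarith) hxa.le)
  have hsqrt : √(x ^ 2 - a ^ 2) = r * (x + a) := by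
    rw [← Real.sqrt_sq (by positivity : 0 ≤ r * (x + a)), mul_pow, hr2]
    congr 1
    field_simp
    ring
  have hnum : a = (x + a) / 2 * (1 - r ^ 2) := by rw [hr2]; field_simp; ring
  have hden : x - r * (x + a) * Real.cos t = (x + a) / 2 * (1 - 2 * r * Real.cos t + r ^ 2) := by
    rw [mul_add, hr2]; field_simp; ring
  rw [hsqrt, hden]
  nth_rw 1 [hnum]
  exact mul_div_mul_left _ _ (by positivity)

theorem rpow_abs_div_two_eq_sqrt_pow_natAbs {q : ℝ} (hq : 0 ≤ q) (n : ℤ) :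
    q ^ ((|n| : ℝ) / 2) = √q ^ n.natAbs := by
  rw [Real.sqrt_eq_rpow, ← Real.rpow_natCast, ← Real.rpow_mul hq, Nat.cast_natAbs, Int.cast_abs]
  ring_nf

/-- Fourier coefficients of `t ↦ a/(x − √(x² − a²) cos t)` for `x > a > 0`:
the `n`-th coefficient equals `((x−a)/(x+a))^{|n|/2}`. -/
theorem fourier_coeff_poisson_kernel (x a : ℝ) (ha : 0 < a) (hx : a < x) (n : ℤ) :
    (1 / (2 * Real.pi) : ℂ) * ∫ t in (0:ℝ)..(2 * Real.pi),
        (a : ℂ) * Complex.exp (-(n : ℂ) * Complex.I * t) /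
          ((x : ℂ) - (Real.sqrt (x ^ 2 - a ^ 2) : ℝ) * (Real.cos t : ℝ))
      = (((x - a) / (x + a)) ^ ((|n| : ℝ) / 2) : ℝ) := by
  have hq : 0 ≤ (x - a) / (x + a) := div_nonneg (by linarith) (by linarith)
  rw [rpow_abs_div_two_eq_sqrt_pow_natAbs hq]
  set r := √((x - a) / (x + a))
  have hr : |r| < 1 := by
    rw [abs_of_nonneg (Real.sqrt_nonneg _), Real.sqrt_lt' one_pos, one_pow,
      div_lt_one (by linarith)]
    linarith
  have hc : Summable fun m : ℤ => ‖(r : ℂ) ^ m.natAbs‖ :=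
    (summable_pow_natAbs hr).abs.congr fun m => by simp
  have hintegrand : ∀ t : ℝ, (a : ℂ) * exp (-n * I * t) /
        ((x : ℂ) - (√(x ^ 2 - a ^ 2) : ℝ) * (Real.cos t : ℝ)) =
      (∑' m : ℤ, (r : ℂ) ^ m.natAbs * exp (m * I * t)) * exp (-n * I * t) := by
    intro t
    rw [(hasSum_pow_natAbs_mul_exp hr t).tsum_eq, ← div_sub_sqrt_mul_cos_eq hx.le (by linarith) t]
    push_cast
    ring
  simp_rw [hintegrand, integral_tsum_mul_exp_mul_I_mul_exp_neg_mul_I _ hc]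
  push_cast
  field_simp
end

section
/- Let a > 0 and define F₁(φ, I) = arctan( √I·cos φ / (√(I + a) + √I·sin φ) ) for I > 0. Then the k-th Fourier coefficient of φ ↦ F₁(φ, I) equals (i^{k−1}/(2k))·(I/(I+a))^{|k|/2} for k ≠ 0, and equals 0 for k = 0. -/
/-!
With `β = √I / √(I + a) ∈ [0, 1)` one has
`F₁(φ) = arctan (β cos φ / (1 + β sin φ)) = Im (-log (1 - iβe^{iφ})) = Im ∑ₙ (iβe^{iφ})ⁿ / n`.
Writing `Im w = (w - w̄) / 2i` turns this into an absolutely convergent two-sided Fourier series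
`∑_{n ∈ ℤ} cₙ e^{inφ}` with `cₙ = i^{n-1} β^{|n|} / 2n`, and integrating it termwise against
`e^{-ikφ}` picks out `c_k`.
-/

open Complex

theorem integral_exp_int_mul_I (m : ℤ) :
    ∫ φ in (0:ℝ)..(2 * Real.pi), exp (m * I * φ) = if m = 0 then (2 * Real.pi : ℂ) else 0 := by
  rcases eq_or_ne m 0 with rfl | hm
  · simp
  · rw [if_neg hm, integral_exp_mul_complex (by simp [Complex.ext_iff, hm])]
    have h : exp (m * I * (2 * Real.pi)) = 1 := by
      rw [show (m : ℂ) * I * (2 * Real.pi) = m * (2 * Real.pi * I) by ring]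
      exact exp_int_mul_two_pi_mul_I m
    simp [h]

theorem norm_exp_int_mul_I_mul (m : ℤ) (φ : ℝ) : ‖exp (m * I * φ)‖ = 1 := by
  rw [show (m : ℂ) * I * φ = ((m * φ : ℝ) : ℂ) * I by push_cast; ring, norm_exp_ofReal_mul_I]

theorem integral_tsum_mul_exp_neg {c : ℤ → ℂ} (hc : Summable fun n ↦ ‖c n‖) (k : ℤ) :
    (1 / (2 * Real.pi) : ℂ) * ∫ φ in (0:ℝ)..(2 * Real.pi),
      (∑' n : ℤ, c n * exp (n * I * φ)) * exp (-k * I * φ) = c k := by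
  have hterm : ∀ (n : ℤ) (φ : ℝ), c n * exp (n * I * φ) * exp (-k * I * φ)
      = c n * exp ((n - k : ℤ) * I * φ) := fun n φ ↦ by
    rw [mul_assoc, ← exp_add]; push_cast; ring_nf
  have hsum : HasSum (fun n : ℤ ↦ ∫ φ in (0:ℝ)..(2 * Real.pi),
      c n * exp (n * I * φ) * exp (-k * I * φ))
      (∫ φ in (0:ℝ)..(2 * Real.pi), (∑' n : ℤ, c n * exp (n * I * φ)) * exp (-k * I * φ)) := by
    refine intervalIntegral.hasSum_integral_of_dominated_convergence (fun n _ ↦ ‖c n‖)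
      (fun n ↦ (by fun_prop : Continuous _).aestronglyMeasurable) ?_
      (.of_forall fun _ _ ↦ hc) intervalIntegrable_const (.of_forall fun φ _ ↦ ?_)
    · exact fun n ↦ .of_forall fun φ _ ↦ by rw [hterm, norm_mul, norm_exp_int_mul_I_mul, mul_one]
    · refine (Summable.hasSum ?_).mul_right _
      exact (hc.congr fun n ↦ by rw [norm_mul, norm_exp_int_mul_I_mul, mul_one]).of_norm
  have hint : ∀ n : ℤ, ∫ φ in (0:ℝ)..(2 * Real.pi), c n * exp (n * I * φ) * exp (-k * I * φ)
      = if n = k then 2 * Real.pi * c k else 0 := fun n ↦ by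
    simp_rw [hterm, intervalIntegral.integral_const_mul, integral_exp_int_mul_I, sub_eq_zero]
    split_ifs with h <;> simp [h, mul_comm]
  rw [(hsum.unique ((hasSum_ite_eq k _).congr_fun hint))]
  field_simp [Real.pi_ne_zero]

theorem Complex.arg_eq_arctan_of_re_pos {z : ℂ} (hz : 0 < z.re) :
    arg z = Real.arctan (z.im / z.re) := by
  have h := abs_lt.mp (abs_arg_lt_pi_div_two_iff.mpr (Or.inl hz))
  rw [← tan_arg, Real.arctan_tan h.1 h.2]

noncomputable def arctanFourierCoeff (β : ℝ) (n : ℤ) : ℂ :=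
  if n = 0 then 0 else I ^ (n - 1) / (2 * n) * (β : ℂ) ^ n.natAbs

theorem arctanFourierCoeff_natCast_mul_exp (β : ℝ) (n : ℕ) (φ : ℝ) :
    arctanFourierCoeff β n * exp ((n : ℤ) * I * φ) = (I * β * exp (φ * I)) ^ n / n / (2 * I) := by
  rcases n with _ | m
  · simp [arctanFourierCoeff] -- the right side is `1 / 0 / (2 * I) = 0`
  · have hm : ((m + 1 : ℕ) : ℂ) ≠ 0 := Nat.cast_ne_zero.mpr m.succ_ne_zero
    rw [arctanFourierCoeff, if_neg (by omega), show ((m + 1 : ℕ) : ℤ) - 1 = m by push_cast; ring,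
      zpow_natCast, Int.natAbs_natCast, mul_pow, mul_pow, ← exp_nat_mul]
    push_cast
    field_simp
    ring_nf

theorem arctanFourierCoeff_neg_natCast_mul_exp (β : ℝ) (n : ℕ) (φ : ℝ) :
    arctanFourierCoeff β (-n) * exp ((-n : ℤ) * I * φ)
      = -(starRingEnd ℂ) ((I * β * exp (φ * I)) ^ n / n) / (2 * I) := by
  rcases n with _ | m
  · simp [arctanFourierCoeff]
  · have hm : ((m + 1 : ℕ) : ℂ) ≠ 0 := Nat.cast_ne_zero.mpr m.succ_ne_zero
    rw [arctanFourierCoeff, if_neg (by omega), show -((m + 1 : ℕ) : ℤ) - 1 = -((m + 2 : ℕ) : ℤ) by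
      push_cast; ring, zpow_neg, zpow_natCast, ← inv_pow, inv_I, Int.natAbs_neg,
      Int.natAbs_natCast, map_div₀, map_pow, map_mul, map_mul, conj_I, conj_ofReal, ← exp_conj,
      map_mul, conj_ofReal, conj_I, map_natCast, mul_pow, mul_pow, ← exp_nat_mul]
    push_cast
    field_simp
    ring_nf
    rw [show I ^ 3 = -I by rw [pow_succ, I_sq]; ring]
    ring

theorem hasSum_arctanFourierCoeff_mul_exp {β : ℝ} (hβ : |β| < 1) (φ : ℝ) :
    HasSum (fun n : ℤ ↦ arctanFourierCoeff β n * exp (n * I * φ))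
      (Real.arctan (β * Real.cos φ / (1 + β * Real.sin φ))) := by
  set w : ℂ := I * β * exp (φ * I)
  have hw : ‖w‖ < 1 := by simpa [w, norm_exp_ofReal_mul_I] using hβ
  have hlog := hasSum_taylorSeries_neg_log hw
  have hre : (1 - w).re = 1 + β * Real.sin φ := by
    simp [w, exp_ofReal_mul_I_re, exp_ofReal_mul_I_im]
  have him : (1 - w).im = -(β * Real.cos φ) := by
    simp [w, exp_ofReal_mul_I_re, exp_ofReal_mul_I_im]
  have hre_pos : 0 < (1 - w).re := by
    have := (abs_mul β _).trans_le (mul_le_of_le_one_right (abs_nonneg β) (Real.abs_sin_le_one φ))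
    linarith [neg_abs_le (β * Real.sin φ)]
  have h := HasSum.of_nat_of_neg (f := fun n : ℤ ↦ arctanFourierCoeff β n * exp (n * I * φ))
    (by simpa only [arctanFourierCoeff_natCast_mul_exp] using hlog.div_const (2 * I))
    (by simpa only [arctanFourierCoeff_neg_natCast_mul_exp] using
      (hasSum_conj'.mpr hlog).neg.div_const (2 * I))
  have hval : -log (1 - w) / (2 * I) + -(starRingEnd ℂ) (-log (1 - w)) / (2 * I)
      = ((-log (1 - w)).im : ℂ) := by
    rw [im_eq_sub_conj]; ring
  have him_log : (-log (1 - w)).im = Real.arctan (β * Real.cos φ / (1 + β * Real.sin φ)) := by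
    rw [neg_im, log_im, arg_eq_arctan_of_re_pos hre_pos, hre, him, neg_div, Real.arctan_neg,
      neg_neg]
  rwa [show arctanFourierCoeff β 0 = 0 from if_pos rfl, zero_mul, sub_zero, hval, him_log] at h

theorem norm_arctanFourierCoeff_le (β : ℝ) (n : ℤ) : ‖arctanFourierCoeff β n‖ ≤ |β| ^ n.natAbs := by
  unfold arctanFourierCoeff
  split_ifs with hn
  · rw [norm_zero]; positivity
  · have h2n : (1 : ℝ) ≤ ‖(2 * n : ℂ)‖ := by
      rw [norm_mul, Complex.norm_two, norm_intCast]
      have : (1 : ℝ) ≤ |(n : ℝ)| := by exact_mod_cast Int.one_le_abs hn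
      linarith
    rw [norm_mul, norm_div, norm_zpow, norm_I, one_zpow, norm_pow, norm_real, Real.norm_eq_abs]
    exact mul_le_of_le_one_left (by positivity) (div_le_one_of_le₀ h2n (by positivity))

theorem summable_norm_arctanFourierCoeff {β : ℝ} (hβ : |β| < 1) :
    Summable fun n ↦ ‖arctanFourierCoeff β n‖ := by
  have hgeom := summable_geometric_of_lt_one (abs_nonneg β) hβ
  refine .of_nonneg_of_le (fun _ ↦ norm_nonneg _) (norm_arctanFourierCoeff_le β) ?_
  exact .of_nat_of_neg (by simpa using hgeom) (by simpa using hgeom)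

theorem rpow_abs_div_two_of_sq_eq {x β : ℝ} (hβ : 0 ≤ β) (hx : x = β ^ 2) (k : ℤ) :
    x ^ ((|k| : ℝ) / 2) = β ^ k.natAbs := by
  rw [hx, ← Real.rpow_natCast_mul hβ, Nat.cast_ofNat, mul_div_cancel₀ _ two_ne_zero,
    ← Int.cast_abs, ← Nat.cast_natAbs, Real.rpow_natCast]

/-- Fourier coefficients of `φ ↦ F₁(φ, I) = arctan(√I cos φ/(√(I+a) + √I sin φ))`:
the `k`-th coefficient is `i^{k−1}/(2k)·(I/(I+a))^{|k|/2}` for `k ≠ 0`, and `0`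
for `k = 0`. -/
theorem fourier_coeff_F1 (a I : ℝ) (ha : 0 < a) (hI : 0 < I) (k : ℤ) :
    (1 / (2 * Real.pi) : ℂ) * ∫ φ in (0:ℝ)..(2 * Real.pi),
        ((Real.arctan (Real.sqrt I * Real.cos φ /
            (Real.sqrt (I + a) + Real.sqrt I * Real.sin φ)) : ℝ) : ℂ) *
          Complex.exp (-(k : ℂ) * Complex.I * φ)
      = if k = 0 then 0
        else Complex.I ^ (k - 1) / (2 * (k : ℂ)) *
          ((((I / (I + a)) ^ ((|k| : ℝ) / 2) : ℝ)) : ℂ) := by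
  set β := Real.sqrt I / Real.sqrt (I + a)
  have hs : 0 < Real.sqrt (I + a) := Real.sqrt_pos.mpr (by linarith)
  have hβ0 : 0 ≤ β := by positivity
  have hβ : |β| < 1 := by
    rw [abs_of_nonneg hβ0, div_lt_one hs]
    exact Real.sqrt_lt_sqrt hI.le (by linarith)
  have hβsq : I / (I + a) = β ^ 2 := by
    rw [div_pow, Real.sq_sqrt hI.le, Real.sq_sqrt (by linarith)]
  have hseries : ∀ φ : ℝ, Real.arctan (Real.sqrt I * Real.cos φ /
      (Real.sqrt (I + a) + Real.sqrt I * Real.sin φ))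
        = ∑' n : ℤ, arctanFourierCoeff β n * exp (n * Complex.I * φ) := fun φ ↦ by
    rw [(hasSum_arctanFourierCoeff_mul_exp hβ φ).tsum_eq]
    congr 2
    rw [div_mul_eq_mul_div, div_mul_eq_mul_div, one_add_div hs.ne',
      div_div_div_cancel_right₀ hs.ne']
  simp_rw [hseries]
  rw [integral_tsum_mul_exp_neg (summable_norm_arctanFourierCoeff hβ), arctanFourierCoeff,
    rpow_abs_div_two_of_sq_eq hβ0 hβsq, ofReal_pow]
end

section
/- Suppose a ∈ C¹(ℝ) satisfies 0 < A₁ ≤ a(t) ≤ A₂ and |a'(t)| ≤ A₃, and F ∈ C(ℝ) satisfies F(t) = αt + O(log(t)²) as t → +∞ with α > 0. If φ solves φ'(t) = −a(t)a'(t)·cos(bt + φ(t)) / (√(F(t)² − a(t)²)·(F(t) + √(F(t)² − a(t)²)·sin(bt + φ(t)))) on a neighborhood of +∞ (b > 0 constant), then φ(t) converges to a finite limit φ(∞) as t → +∞, with φ(t) = φ(∞) + O(log(t)/t). -/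
/-!
Beyond a threshold `T` the equation is non-degenerate, and writing `S = √(F² - a²)` the
Cauchy–Schwarz inequality `a |cos u| ≤ F + S sin u` gives `|φ'| ≤ |a'| / S = O(1 / t)`.
Hence the phase `u = b t + φ` increases at speed between `b / 2` and `3 b / 2` and crosses the
zeros `n π ± π / 2` of `cos` at times `τₖ` spaced about `π / b` apart. On `[τₖ, τₖ₊₁]` the sign
of `cos u` is fixed, and freezing the lower bounds `S ≥ q ~ α τₖ` and `F - S = a² / (F + S) ≥ ε ~
1 / τₖ` makes `|φ'|` dominated by the derivative of `± K / q · log (ε + q (1 + sin u))`, so the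
oscillation of `φ` over the piece is `O(log τₖ / τₖ²)`. These bounds telescope against
`(log t + 2) / t`, which yields both the limit and the rate `O(log t / t)`.
-/

open Filter Real Set Topology

theorem abs_sub_le_sub_of_abs_deriv_le {f f' g g' : ℝ → ℝ} {a b : ℝ} (hab : a ≤ b)
    (hf : ∀ t ∈ Icc a b, HasDerivAt f (f' t) t) (hg : ∀ t ∈ Icc a b, HasDerivAt g (g' t) t)
    (hle : ∀ t ∈ Icc a b, |f' t| ≤ g' t) : |f b - f a| ≤ g b - g a := by
  have mono : ∀ h h' : ℝ → ℝ, (∀ t ∈ Icc a b, HasDerivAt h (h' t) t) →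
      (∀ t ∈ Icc a b, 0 ≤ h' t) → h a ≤ h b := fun h h' hh hh' =>
    monotoneOn_of_hasDerivWithinAt_nonneg (convex_Icc a b)
      (fun t ht => (hh t ht).continuousAt.continuousWithinAt)
      (fun t ht => (hh t (interior_subset ht)).hasDerivWithinAt)
      (fun t ht => hh' t (interior_subset ht)) (left_mem_Icc.2 hab) (right_mem_Icc.2 hab) hab
  have h₁ := mono (g - f) (g' - f') (fun t ht => (hg t ht).sub (hf t ht))
    fun t ht => sub_nonneg.2 ((le_abs_self _).trans (hle t ht))
  have h₂ := mono (g + f) (g' + f') (fun t ht => (hg t ht).add (hf t ht))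
    fun t ht => show 0 ≤ g' t + f' t by linarith [neg_abs_le (f' t), hle t ht]
  simp only [Pi.sub_apply, Pi.add_apply] at h₁ h₂
  exact abs_le.2 ⟨by linarith, by linarith⟩

theorem neg_one_pow_mul_cos_nonneg (n : ℕ) {x : ℝ}
    (hx : x ∈ Icc (n * π - π / 2) (n * π + π / 2)) : 0 ≤ (-1) ^ n * cos x := by
  have h : cos x = (-1) ^ n * cos (x - n * π) := by rw [← cos_add_nat_mul_pi, sub_add_cancel]
  rw [h, ← mul_assoc, ← mul_pow, neg_one_mul, neg_neg, one_pow, one_mul]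
  exact cos_nonneg_of_mem_Icc ⟨by linarith [hx.1], by linarith [hx.2]⟩

theorem mul_abs_cos_le_add_mul_sin {P S A θ : ℝ} (hP : 0 ≤ P) (h : P ^ 2 = S ^ 2 + A ^ 2) :
    A * |cos θ| ≤ P + S * sin θ := by
  have h1 : sin θ ^ 2 + cos θ ^ 2 = 1 := sin_sq_add_cos_sq θ
  have h2 : |cos θ| ^ 2 = cos θ ^ 2 := sq_abs _
  nlinarith [sq_nonneg (S * |cos θ| + A * sin θ), sq_nonneg (A * |cos θ| - S * sin θ),
    abs_nonneg (cos θ), neg_abs_le (sin θ), abs_sin_le_one θ]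

theorem log_one_add_mul_sq_le {κ s : ℝ} (hκ : 0 ≤ κ) (hs : 1 ≤ s) :
    log (1 + κ * s ^ 2) ≤ log (1 + κ) + 2 * log s := by
  calc log (1 + κ * s ^ 2) ≤ log ((1 + κ) * s ^ 2) := log_le_log (by positivity) (by nlinarith)
    _ = log (1 + κ) + 2 * log s := by
      rw [log_mul (by positivity) (by positivity), log_pow, Nat.cast_ofNat]

theorem sub_mul_log_add_one_div_sq_le {x y : ℝ} (hx : 1 ≤ x) (hxy : x ≤ y) :
    (y - x) * (log x + 1) / y ^ 2 ≤ (log x + 2) / x - (log y + 2) / y := by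
  rcases hxy.eq_or_lt with rfl | hxy
  · simp
  have hderiv : ∀ z, 0 < z →
      HasDerivAt (fun z => (log z + 2) / z) (-((log z + 1) / z ^ 2)) z := by
    intro z hz
    have h := ((hasDerivAt_log hz.ne').add_const 2).div (hasDerivAt_id' z) hz.ne'
    rwa [inv_mul_cancel₀ hz.ne', show 1 - (log z + 2) * 1 = -(log z + 1) by ring, neg_div] at h
  obtain ⟨c, hc, hslope⟩ := exists_hasDerivAt_eq_slope (fun z => (log z + 2) / z) _ hxy
    (fun z hz => (hderiv z (by linarith [hz.1])).continuousAt.continuousWithinAt)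
    (fun z hz => hderiv z (by linarith [hz.1]))
  have hc0 : 0 < c := by linarith [hc.1]
  have hdiff : (log x + 2) / x - (log y + 2) / y = (y - x) * ((log c + 1) / c ^ 2) := by
    rw [eq_div_iff (by linarith)] at hslope
    linarith
  have hlog : log x ≤ log c := log_le_log (by linarith) hc.1.le
  have hlogx : 0 ≤ log x + 1 := by linarith [log_nonneg hx]
  rw [hdiff, mul_div_assoc]
  gcongr
  · linarith
  · exact hc.2.le

theorem mul_log_add_one_div_sq_le_sub {x y δ : ℝ} (hx : 1 ≤ x) (hδ : 0 ≤ δ) (hxy : x + δ ≤ y)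
    (hy : y ≤ 2 * x) : δ * (log x + 1) / (4 * x ^ 2) ≤ (log x + 2) / x - (log y + 2) / y := by
  have hlog : 0 ≤ log x + 1 := by linarith [log_nonneg hx]
  refine le_trans ?_ (sub_mul_log_add_one_div_sq_le hx (by linarith))
  exact div_le_div₀ (mul_nonneg (by linarith) hlog) (mul_le_mul_of_nonneg_right (by linarith) hlog)
    (by nlinarith) (by nlinarith)

theorem tendsto_log_add_two_div_atTop : Tendsto (fun x => (log x + 2) / x) atTop (𝓝 0) := by
  have h := isLittleO_log_id_atTop.tendsto_div_nhds_zero.add (tendsto_inv_atTop_zero.const_mul 2)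
  rw [zero_add, mul_zero] at h
  exact h.congr fun x => by simp only [id]; ring

theorem log_add_two_div_le {s t : ℝ} (hs : 3 ≤ s) (hst : s ≤ t) (ht : t ≤ 2 * s) :
    (log s + 2) / s ≤ 6 * log t / t := by
  have hlog_t : 1 ≤ log t := by
    rw [le_log_iff_exp_le (by linarith)]
    linarith [exp_one_lt_d9]
  have hlog_s : log s ≤ log t := log_le_log (by linarith) hst
  calc (log s + 2) / s ≤ 3 * log t / (t / 2) := by gcongr <;> linarith
    _ = 6 * log t / t := by field_simp; ring

theorem eventually_abs_sub_le_half {F : ℝ → ℝ} {α C T : ℝ} (hα : 0 < α)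
    (hF : ∀ t ≥ T, |F t - α * t| ≤ C * log t ^ 2) :
    ∀ᶠ t in atTop, |F t - α * t| ≤ α * t / 2 := by
  filter_upwards [((isLittleO_pow_log_id_atTop (n := 2)).const_mul_left C).def
    (by positivity : 0 < α / 2), eventually_ge_atTop T, eventually_ge_atTop 0] with t hlog hT h0
  rw [norm_eq_abs, id, norm_eq_abs, abs_of_nonneg h0] at hlog
  linarith [hF t hT, le_abs_self (C * log t ^ 2)]

theorem tendsto_of_abs_sub_le_mul_log_div {φ : ℝ → ℝ} {L C T : ℝ}
    (h : ∀ t ≥ T, |φ t - L| ≤ C * log t / t) : Tendsto φ atTop (𝓝 L) := by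
  rw [tendsto_iff_norm_sub_tendsto_zero]
  refine squeeze_zero' (Eventually.of_forall fun t => norm_nonneg _)
    ((eventually_ge_atTop T).mono h) ?_
  simpa [mul_div_assoc] using isLittleO_log_id_atTop.tendsto_div_nhds_zero.const_mul C

theorem exists_tendsto_abs_sub_le_of_abs_sub_succ_le {x g : ℕ → ℝ}
    (hx : ∀ k, |x (k + 1) - x k| ≤ g k - g (k + 1)) (hg : Tendsto g atTop (𝓝 0)) :
    ∃ L, Tendsto x atTop (𝓝 L) ∧ ∀ k, |x k - L| ≤ g k := by
  have hanti : Antitone g :=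
    antitone_nat_of_succ_le fun k => by linarith [abs_nonneg (x (k + 1) - x k), hx k]
  have hg0 : ∀ k, 0 ≤ g k := hanti.le_of_tendsto hg
  have htele : ∀ k n, k ≤ n → |x n - x k| ≤ g k - g n := by
    intro k n hkn
    induction n, hkn using Nat.le_induction with
    | base => simp
    | succ n _ ih =>
      calc |x (n + 1) - x k| ≤ |x (n + 1) - x n| + |x n - x k| := abs_sub_le _ _ _
        _ ≤ g k - g (n + 1) := by linarith [hx n]
  have hcauchy : CauchySeq x := by
    refine cauchySeq_of_le_tendsto_0 (fun N => 2 * g N) (fun n m N hn hm => ?_)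
      (by simpa using hg.const_mul 2)
    rw [dist_eq]
    calc |x n - x m| ≤ |x n - x N| + |x N - x m| := abs_sub_le _ _ _
      _ ≤ 2 * g N := by
        rw [abs_sub_comm (x N)]
        linarith [htele N n hn, htele N m hm, hg0 n, hg0 m]
  obtain ⟨L, hL⟩ := cauchySeq_tendsto_of_complete hcauchy
  refine ⟨L, hL, fun k => ?_⟩
  refine le_of_tendsto ((tendsto_const_nhds.sub hL).abs.congr fun n => abs_sub_comm _ _) ?_
  filter_upwards [eventually_ge_atTop k] with n hn
  linarith [htele k n hn, hg0 n]

theorem exists_mem_Icc_of_tendsto_atTop {τ : ℕ → ℝ} (hτ : Tendsto τ atTop atTop) {t : ℝ}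
    (ht : τ 0 ≤ t) : ∃ k, t ∈ Icc (τ k) (τ (k + 1)) := by
  have hex : ∃ k, t < τ (k + 1) :=
    ((tendsto_add_atTop_iff_nat 1).2 hτ |>.eventually_gt_atTop t).exists
  refine ⟨Nat.find hex, ?_, (Nat.find_spec hex).le⟩
  rcases h : Nat.find hex with _ | k
  · exact ht
  · exact not_lt.1 (Nat.find_min hex (h ▸ k.lt_succ_self))

theorem exists_abs_sub_le_mul_log_div {φ : ℝ → ℝ} {τ : ℕ → ℝ} {C δ : ℝ} (hδ : 0 < δ)
    (hτ₀ : 3 ≤ τ 0) (hτ : ∀ k, δ ≤ τ (k + 1) - τ k ∧ τ (k + 1) ≤ 2 * τ k)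
    (hosc : ∀ k, ∀ t ∈ Icc (τ k) (τ (k + 1)), |φ t - φ (τ k)| ≤ C * (log (τ k) + 1) / τ k ^ 2) :
    ∃ L C', ∀ t ≥ τ 0, |φ t - L| ≤ C' * log t / t := by
  have hτ_lin : ∀ k : ℕ, τ 0 + k * δ ≤ τ k := fun k => by
    induction k with
    | zero => simp
    | succ k ih => push_cast; linarith [(hτ k).1]
  have hτ3 : ∀ k, 3 ≤ τ k := fun k => by nlinarith [hτ_lin k, k.cast_nonneg (α := ℝ)]
  have hτ_top : Tendsto τ atTop atTop :=
    tendsto_atTop_mono hτ_lin <| tendsto_atTop_add_const_left _ _ <|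
      tendsto_natCast_atTop_atTop.atTop_mul_const hδ
  have hC : 0 ≤ C := by
    have h₀ := hosc 0 (τ 0) (left_mem_Icc.2 (by linarith [(hτ 0).1]))
    rw [sub_self, abs_zero, mul_div_assoc] at h₀
    have hlog := log_nonneg (show (1 : ℝ) ≤ τ 0 by linarith)
    exact nonneg_of_mul_nonneg_left h₀ (by positivity)
  set g : ℕ → ℝ := fun k => 4 * C / δ * ((log (τ k) + 2) / τ k) with hg
  -- `(log x + 2) / x` is an antiderivative of `-(log x + 1) / x²`
  have hstep : ∀ k, C * (log (τ k) + 1) / τ k ^ 2 ≤ g k - g (k + 1) := fun k =>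
    calc C * (log (τ k) + 1) / τ k ^ 2 = 4 * C / δ * (δ * (log (τ k) + 1) / (4 * τ k ^ 2)) := by
          field_simp
      _ ≤ g k - g (k + 1) := by
          rw [hg, ← mul_sub]
          gcongr
          exact mul_log_add_one_div_sq_le_sub (by linarith [hτ3 k]) hδ.le (by linarith [(hτ k).1])
            (hτ k).2
  obtain ⟨L, -, hL⟩ := exists_tendsto_abs_sub_le_of_abs_sub_succ_le (x := fun k => φ (τ k))
    (fun k => (hosc k _ (right_mem_Icc.2 (by linarith [(hτ k).1, hδ]))).trans (hstep k))
    (by simpa [hg] using (tendsto_log_add_two_div_atTop.comp hτ_top).const_mul (4 * C / δ))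
  refine ⟨L, 48 * C / δ, fun t ht => ?_⟩
  obtain ⟨k, htk⟩ := exists_mem_Icc_of_tendsto_atTop hτ_top ht
  have hg_nonneg : 0 ≤ g (k + 1) := (abs_nonneg _).trans (hL (k + 1))
  calc |φ t - L| ≤ |φ t - φ (τ k)| + |φ (τ k) - L| := abs_sub_le _ _ _
    _ ≤ 2 * g k := by linarith [hosc k t htk, hstep k, hL k]
    _ = 8 * C / δ * ((log (τ k) + 2) / τ k) := by simp only [hg]; ring
    _ ≤ 8 * C / δ * (6 * log t / t) :=
        mul_le_mul_of_nonneg_left (log_add_two_div_le (hτ3 k) htk.1 (htk.2.trans (hτ k).2))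
          (div_nonneg (by linarith) hδ.le)
    _ = 48 * C / δ * log t / t := by ring

theorem exists_hitting_times {u : ℝ → ℝ} {T c d δ θ₀ : ℝ} (hc : 0 < c) (hδ : 0 < δ)
    (hu : ContinuousOn u (Ici T))
    (hgrowth : ∀ t₁ t₂, T ≤ t₁ → t₁ ≤ t₂ →
      c * (t₂ - t₁) ≤ u t₂ - u t₁ ∧ u t₂ - u t₁ ≤ d * (t₂ - t₁))
    (hθ₀ : u T ≤ θ₀) :
    ∃ τ : ℕ → ℝ, ∀ k : ℕ, T ≤ τ k ∧ δ ≤ d * (τ (k + 1) - τ k) ∧ c * (τ (k + 1) - τ k) ≤ δ ∧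
      ∀ t ∈ Icc (τ k) (τ (k + 1)), u t ∈ Icc (θ₀ + k * δ) (θ₀ + (k + 1) * δ) := by
  have htop : Tendsto u atTop atTop := by
    refine tendsto_atTop_mono' _ ?_ (tendsto_atTop_add_const_left _ (u T) <|
      (tendsto_atTop_add_const_right _ (-T) tendsto_id).const_mul_atTop hc)
    filter_upwards [eventually_ge_atTop T] with t ht
    show u T + c * (t + -T) ≤ u t
    linarith [(hgrowth T t le_rfl ht).1]
  have hhit : ∀ k : ℕ, ∃ t, T ≤ t ∧ u t = θ₀ + k * δ := fun k =>
    intermediate_value_Ici hu htop (show u T ≤ θ₀ + k * δ by nlinarith [k.cast_nonneg (α := ℝ)])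
  choose τ hτT hτu using hhit
  have hτ_mono : ∀ k, τ k ≤ τ (k + 1) := fun k => by
    by_contra! hlt
    have := (hgrowth _ _ (hτT (k + 1)) hlt.le).1
    rw [hτu, hτu] at this
    push_cast at this
    nlinarith
  refine ⟨τ, fun k => ⟨hτT k, ?_, ?_, fun t ht => ?_⟩⟩
  · have := (hgrowth _ _ (hτT k) (hτ_mono k)).2
    rw [hτu, hτu] at this; push_cast at this; linarith
  · have := (hgrowth _ _ (hτT k) (hτ_mono k)).1
    rw [hτu, hτu] at this; push_cast at this; linarith
  · have h₁ := (hgrowth _ _ (hτT k) ht.1).1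
    have h₂ := (hgrowth _ _ ((hτT k).trans ht.1) ht.2).1
    rw [hτu] at h₁ h₂
    push_cast at h₂
    constructor <;> nlinarith [ht.1, ht.2]

theorem abs_sub_le_log_of_abs_deriv_le {φ φ' u u' : ℝ → ℝ} {t₁ t₂ K q ε σ : ℝ} (ht : t₁ ≤ t₂)
    (hK : 0 ≤ K) (hq : 0 < q) (hε : 0 < ε) (hσ : |σ| = 1)
    (hφ : ∀ t ∈ Icc t₁ t₂, HasDerivAt φ (φ' t) t) (hu : ∀ t ∈ Icc t₁ t₂, HasDerivAt u (u' t) t)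
    (hsign : ∀ t ∈ Icc t₁ t₂, 0 ≤ σ * cos (u t))
    (hbound : ∀ t ∈ Icc t₁ t₂, |φ' t| ≤ K * |cos (u t)| * u' t / (ε + q * (1 + sin (u t)))) :
    |φ t₂ - φ t₁| ≤ K / q * log (1 + 2 * q / ε) := by
  set X : ℝ → ℝ := fun t => ε + q * (1 + sin (u t)) with hX
  have hX_ge : ∀ t, ε ≤ X t := fun t => by
    simp only [hX]; nlinarith [neg_one_le_sin (u t)]
  have hX_le : ∀ t, X t ≤ ε + 2 * q := fun t => by
    simp only [hX]; nlinarith [sin_le_one (u t)]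
  have hX_pos : ∀ t, 0 < X t := fun t => hε.trans_le (hX_ge t)
  -- `σ` fixes the sign of `cos ∘ u`, so `σ K / q * log X` is an antiderivative of the bound
  have hcomp : ∀ t ∈ Icc t₁ t₂, HasDerivAt (fun t => σ * K / q * log (X t))
      (K * |cos (u t)| * u' t / X t) t := by
    intro t ht
    have hXd : HasDerivAt X (q * (cos (u t) * u' t)) t :=
      (((hasDerivAt_sin (u t)).comp t (hu t ht)).const_add 1).const_mul q |>.const_add ε
    refine ((hXd.log (hX_pos t).ne').const_mul (σ * K / q)).congr_deriv ?_
    rw [show |cos (u t)| = σ * cos (u t) by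
      rw [← abs_of_nonneg (hsign t ht), abs_mul, hσ, one_mul]]
    field_simp
  have hlog : ∀ t, log (X t) ∈ Icc (log ε) (log (ε + 2 * q)) := fun t =>
    ⟨log_le_log hε (hX_ge t), log_le_log (hX_pos t) (hX_le t)⟩
  calc |φ t₂ - φ t₁| ≤ σ * K / q * log (X t₂) - σ * K / q * log (X t₁) :=
        abs_sub_le_sub_of_abs_deriv_le ht hφ hcomp hbound
    _ = σ * (K / q) * (log (X t₂) - log (X t₁)) := by ring
    _ ≤ K / q * |log (X t₂) - log (X t₁)| := by
        rw [mul_comm σ, mul_assoc]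
        refine mul_le_mul_of_nonneg_left ?_ (by positivity)
        calc σ * (log (X t₂) - log (X t₁)) ≤ |σ * (log (X t₂) - log (X t₁))| := le_abs_self _
          _ = _ := by rw [abs_mul, hσ, one_mul]
    _ ≤ K / q * (log (ε + 2 * q) - log ε) := by
        gcongr
        exact abs_sub_le_of_le_of_le (hlog _).1 (hlog _).2 (hlog _).1 (hlog _).2
    _ = K / q * log (1 + 2 * q / ε) := by
        rw [← log_div (by positivity) hε.ne', add_div, div_self hε.ne']

/-- The right-hand side of the phase equation, `θ` standing for the phase `b t + φ t`. -/
noncomputable def phaseField (a a' F θ : ℝ) : ℝ :=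
  -(a * a' * cos θ) / (√(F ^ 2 - a ^ 2) * (F + √(F ^ 2 - a ^ 2) * sin θ))

theorem half_le_sqrt_sq_sub_sq {a F : ℝ} (ha : 0 ≤ a) (haF : 2 * a ≤ F) :
    F / 2 ≤ √(F ^ 2 - a ^ 2) :=
  le_sqrt_of_sq_le (by nlinarith)

theorem sq_div_two_mul_le_sub_sqrt {a F : ℝ} (hF : 0 < F) (ha : 0 ≤ a) (haF : a ≤ F) :
    a ^ 2 / (2 * F) ≤ F - √(F ^ 2 - a ^ 2) := by
  have hS := sq_sqrt (show 0 ≤ F ^ 2 - a ^ 2 by nlinarith)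
  have hS₀ := sqrt_nonneg (F ^ 2 - a ^ 2)
  have hSF : √(F ^ 2 - a ^ 2) ≤ F := by nlinarith
  rw [div_le_iff₀ (by positivity)]
  nlinarith

theorem abs_phaseField {a a' F θ : ℝ} (ha : 0 < a) :
    |phaseField a a' F θ| =
      a * |a'| * |cos θ| / |√(F ^ 2 - a ^ 2) * (F + √(F ^ 2 - a ^ 2) * sin θ)| := by
  rw [phaseField, abs_div, abs_neg, abs_mul, abs_mul, abs_of_pos ha]

theorem abs_phaseField_le_two_mul_div {a a' F θ : ℝ} (ha : 0 < a) (haF : 2 * a ≤ F) :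
    |phaseField a a' F θ| ≤ 2 * |a'| / F := by
  have hF : 0 < F := by linarith
  have hS := half_le_sqrt_sq_sub_sq ha.le haF
  have hgap := sq_div_two_mul_le_sub_sqrt hF ha.le (by linarith)
  have hgap_pos : 0 < a ^ 2 / (2 * F) := by positivity
  rw [abs_phaseField ha]
  set S := √(F ^ 2 - a ^ 2) with hS_def
  have hD : 0 < F + S * sin θ := by nlinarith [neg_one_le_sin θ]
  have hcs : a * |cos θ| ≤ F + S * sin θ :=
    mul_abs_cos_le_add_mul_sin hF.le (by rw [hS_def, sq_sqrt (by nlinarith)]; ring)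
  have hSD : 0 < S * (F + S * sin θ) := mul_pos (by linarith) hD
  rw [abs_of_pos hSD, div_le_div_iff₀ hSD hF]
  nlinarith [mul_le_mul_of_nonneg_left hcs (mul_nonneg (abs_nonneg a') hF.le),
    mul_le_mul_of_nonneg_left hS (mul_nonneg (abs_nonneg a') hD.le)]

theorem abs_phaseField_le_of_le {a a' F θ q ε : ℝ} (ha : 0 < a) (haF : 2 * a ≤ F) (hq : 0 < q)
    (hqF : q ≤ F / 2) (hε : 0 < ε) (hεa : ε ≤ a ^ 2 / (2 * F)) :
    |phaseField a a' F θ| ≤ a * |a'| * |cos θ| / (q * (ε + q * (1 + sin θ))) := by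
  have hS := half_le_sqrt_sq_sub_sq ha.le haF
  have hgap := sq_div_two_mul_le_sub_sqrt (F := F) (by linarith) ha.le (by linarith)
  rw [abs_phaseField ha]
  set S := √(F ^ 2 - a ^ 2)
  have hsin := neg_one_le_sin θ
  -- `F + S sin θ = (F - S) + S (1 + sin θ)`
  have hD : ε + q * (1 + sin θ) ≤ F + S * sin θ := by nlinarith
  have hX : 0 < ε + q * (1 + sin θ) := by nlinarith
  gcongr
  calc q * (ε + q * (1 + sin θ)) ≤ S * (F + S * sin θ) := by gcongr; linarith
    _ ≤ |S * (F + S * sin θ)| := le_abs_self _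

structure PhaseRegime (a a' F φ : ℝ → ℝ) (A₁ A₂ A₃ α b T : ℝ) : Prop where
  pos_A₁ : 0 < A₁
  pos_α : 0 < α
  pos_b : 0 < b
  bounds : ∀ t, A₁ ≤ a t ∧ a t ≤ A₂ ∧ |a' t| ≤ A₃
  three_le : 3 ≤ T
  two_pi_div_le : 2 * π / b ≤ T
  four_mul_le : 4 * A₂ ≤ α * T
  eight_mul_le : 8 * A₃ ≤ b * α * T
  abs_F_sub_le : ∀ t ≥ T, |F t - α * t| ≤ α * t / 2
  hasDerivAt : ∀ t ≥ T, HasDerivAt φ (phaseField (a t) (a' t) (F t) (b * t + φ t)) t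

theorem exists_phaseRegime (a a' F φ : ℝ → ℝ) (A₁ A₂ A₃ α b : ℝ)
    (hA₁ : 0 < A₁) (hα : 0 < α) (hb : 0 < b)
    (hbounds : ∀ t, A₁ ≤ a t ∧ a t ≤ A₂ ∧ |a' t| ≤ A₃)
    (hFasym : ∃ C T : ℝ, ∀ t ≥ T, |F t - α * t| ≤ C * log t ^ 2)
    (hφ : ∃ T₀ : ℝ, ∀ t ≥ T₀, HasDerivAt φ (phaseField (a t) (a' t) (F t) (b * t + φ t)) t) :
    ∃ T, PhaseRegime a a' F φ A₁ A₂ A₃ α b T := by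
  obtain ⟨C, T₁, hF⟩ := hFasym
  obtain ⟨T₂, hT₂⟩ := eventually_atTop.1 (eventually_abs_sub_le_half hα hF)
  obtain ⟨T₀, hT₀⟩ := hφ
  obtain ⟨T, hmax, h3, hπ, hA₂, hA₃⟩ := ((eventually_ge_atTop (max T₀ T₂)).and <|
    (eventually_ge_atTop 3).and <| (eventually_ge_atTop (2 * π / b)).and <|
    ((tendsto_id.const_mul_atTop hα).eventually_ge_atTop (4 * A₂)).and
    ((tendsto_id.const_mul_atTop (mul_pos hb hα)).eventually_ge_atTop (8 * A₃))).exists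
  exact ⟨T, hA₁, hα, hb, hbounds, h3, hπ, hA₂, hA₃,
    fun t ht => hT₂ t ((le_max_right _ _).trans (hmax.trans ht)),
    fun t ht => hT₀ t ((le_max_left _ _).trans (hmax.trans ht))⟩

namespace PhaseRegime

variable {a a' F φ : ℝ → ℝ} {A₁ A₂ A₃ α b T : ℝ}

theorem F_bounds (h : PhaseRegime a a' F φ A₁ A₂ A₃ α b T) {t : ℝ} (ht : T ≤ t) :
    α * t / 2 ≤ F t ∧ F t ≤ 2 * α * t ∧ 2 * a t ≤ F t := by
  have hF := abs_le.1 (h.abs_F_sub_le t ht)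
  have hαt : α * T ≤ α * t := mul_le_mul_of_nonneg_left ht h.pos_α.le
  refine ⟨by linarith, by linarith [h.pos_α, h.three_le], ?_⟩
  linarith [(h.bounds t).2.1, h.four_mul_le]

theorem abs_deriv_le (h : PhaseRegime a a' F φ A₁ A₂ A₃ α b T) {t : ℝ} (ht : T ≤ t) :
    |phaseField (a t) (a' t) (F t) (b * t + φ t)| ≤ b / 2 := by
  obtain ⟨hF, -, haF⟩ := h.F_bounds ht
  have ha : 0 < a t := h.pos_A₁.trans_le (h.bounds t).1
  have hαt : 0 < α * t := mul_pos h.pos_α (by linarith [h.three_le])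
  refine (abs_phaseField_le_two_mul_div ha haF).trans ?_
  rw [div_le_div_iff₀ (by linarith) two_pos]
  nlinarith [(h.bounds t).2.2, h.eight_mul_le, h.pos_b, abs_nonneg (a' t),
    mul_le_mul_of_nonneg_left ht (mul_pos h.pos_b h.pos_α).le]

theorem phase_sub_bounds (h : PhaseRegime a a' F φ A₁ A₂ A₃ α b T) {t₁ t₂ : ℝ} (ht₁ : T ≤ t₁)
    (ht : t₁ ≤ t₂) :
    b / 2 * (t₂ - t₁) ≤ (b * t₂ + φ t₂) - (b * t₁ + φ t₁) ∧
      (b * t₂ + φ t₂) - (b * t₁ + φ t₁) ≤ 3 * b / 2 * (t₂ - t₁) := by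
  have hφ := abs_sub_le_sub_of_abs_deriv_le (g := fun t => b / 2 * t) ht
    (fun t hτ => h.hasDerivAt t (ht₁.trans hτ.1))
    (fun t _ => by simpa using (hasDerivAt_id t).const_mul (b / 2))
    (fun t hτ => h.abs_deriv_le (ht₁.trans hτ.1))
  constructor <;> linarith [(abs_le.1 hφ).1, (abs_le.1 hφ).2]

theorem abs_deriv_le_of_mem_Icc (h : PhaseRegime a a' F φ A₁ A₂ A₃ α b T) {s r q ε : ℝ}
    (hs : T ≤ s) (hr : r ∈ Icc s (2 * s)) (hq : q = α * s / 4) (hε : ε = A₁ ^ 2 / (8 * α * s)) :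
    |phaseField (a r) (a' r) (F r) (b * r + φ r)| ≤
      2 * A₂ * A₃ / (b * q) * |cos (b * r + φ r)| *
        (b + phaseField (a r) (a' r) (F r) (b * r + φ r)) /
          (ε + q * (1 + sin (b * r + φ r))) := by
  obtain ⟨hFr, hFr', haF⟩ := h.F_bounds (hs.trans hr.1)
  obtain ⟨hA₁a, haA₂, ha'A₃⟩ := h.bounds r
  have hα := h.pos_α
  have hb := h.pos_b
  have hs0 : 0 < s := by linarith [h.three_le]
  have ha : 0 < a r := h.pos_A₁.trans_le hA₁a
  have hαr : α * s ≤ α * r := mul_le_mul_of_nonneg_left hr.1 hα.le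
  have hq0 : 0 < q := by rw [hq]; positivity
  have hε0 : 0 < ε := by have := h.pos_A₁; rw [hε]; positivity
  have hεa : ε ≤ a r ^ 2 / (2 * F r) := by
    rw [hε, div_le_div_iff₀ (by positivity) (by linarith)]
    have h2F : 2 * F r ≤ 8 * α * s := by nlinarith [hr.2]
    nlinarith [mul_le_mul (pow_le_pow_left₀ h.pos_A₁.le hA₁a 2) h2F (by linarith) (by positivity)]
  have hX : 0 < ε + q * (1 + sin (b * r + φ r)) := by nlinarith [neg_one_le_sin (b * r + φ r)]
  refine (abs_phaseField_le_of_le ha haF hq0 (by linarith) hε0 hεa).trans ?_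
  rw [div_le_div_iff₀ (by positivity) hX]
  have hnum : a r * |a' r| ≤ 2 * A₂ * A₃ / (b * q) *
      (b + phaseField (a r) (a' r) (F r) (b * r + φ r)) * q := by
    rw [show ∀ x, 2 * A₂ * A₃ / (b * q) * x * q = 2 * A₂ * A₃ / b * x by intro x; field_simp]
    calc a r * |a' r| ≤ A₂ * A₃ := mul_le_mul haA₂ ha'A₃ (abs_nonneg _) (by linarith)
      _ = 2 * A₂ * A₃ / b * (b / 2) := by field_simp
      _ ≤ _ := by
        have : 0 ≤ 2 * A₂ * A₃ / b :=
          div_nonneg (mul_nonneg (by linarith) ((abs_nonneg _).trans ha'A₃)) hb.le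
        gcongr
        linarith [(abs_le.1 (h.abs_deriv_le (hs.trans hr.1))).1]
  calc a r * |a' r| * |cos (b * r + φ r)| * (ε + q * (1 + sin (b * r + φ r)))
      = (a r * |a' r|) * (|cos (b * r + φ r)| * (ε + q * (1 + sin (b * r + φ r)))) := by ring
    _ ≤ (2 * A₂ * A₃ / (b * q) * (b + phaseField (a r) (a' r) (F r) (b * r + φ r)) * q) *
        (|cos (b * r + φ r)| * (ε + q * (1 + sin (b * r + φ r)))) := by gcongr
    _ = _ := by ring

theorem abs_sub_le_of_sign_cos (h : PhaseRegime a a' F φ A₁ A₂ A₃ α b T) {s t σ : ℝ}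
    (hs : T ≤ s) (hst : s ≤ t) (ht : t ≤ 2 * s) (hσ : |σ| = 1)
    (hsign : ∀ r ∈ Icc s t, 0 ≤ σ * cos (b * r + φ r)) :
    |φ t - φ s| ≤
      32 * A₂ * A₃ * (log (1 + 4 * α ^ 2 / A₁ ^ 2) + 2) / (b * α ^ 2) * (log s + 1) / s ^ 2 := by
  have hα := h.pos_α
  have hb := h.pos_b
  have hA₁ := h.pos_A₁
  have hA₂ : 0 ≤ A₂ := by linarith [(h.bounds 0).1, (h.bounds 0).2.1]
  have hA₃ : 0 ≤ A₃ := (abs_nonneg _).trans (h.bounds 0).2.2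
  have hs0 : 1 ≤ s := by linarith [h.three_le]
  have key := abs_sub_le_log_of_abs_deriv_le (u := fun r => b * r + φ r) hst
    (K := 2 * A₂ * A₃ / (b * (α * s / 4))) (by positivity) (by positivity) (by positivity) hσ
    (fun r hr => h.hasDerivAt r (hs.trans hr.1))
    (fun r hr => (((hasDerivAt_id r).const_mul b).add (h.hasDerivAt r (hs.trans hr.1))).congr_deriv
      (by rw [mul_one]))
    hsign (fun r hr => h.abs_deriv_le_of_mem_Icc hs ⟨hr.1, hr.2.trans ht⟩ rfl rfl)
  have hκ : 2 * (α * s / 4) / (A₁ ^ 2 / (8 * α * s)) = 4 * α ^ 2 / A₁ ^ 2 * s ^ 2 := by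
    field_simp; ring
  have hc₀ : 0 ≤ log (1 + 4 * α ^ 2 / A₁ ^ 2) :=
    log_nonneg (le_add_of_nonneg_right (by positivity))
  have hlog : log (1 + 4 * α ^ 2 / A₁ ^ 2 * s ^ 2) ≤
      (log (1 + 4 * α ^ 2 / A₁ ^ 2) + 2) * (log s + 1) := by
    nlinarith [log_one_add_mul_sq_le (κ := 4 * α ^ 2 / A₁ ^ 2) (by positivity) hs0,
      mul_nonneg hc₀ (log_nonneg hs0)]
  refine key.trans ?_
  rw [hκ]
  calc 2 * A₂ * A₃ / (b * (α * s / 4)) / (α * s / 4) * log (1 + 4 * α ^ 2 / A₁ ^ 2 * s ^ 2)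
      ≤ 2 * A₂ * A₃ / (b * (α * s / 4)) / (α * s / 4) *
        ((log (1 + 4 * α ^ 2 / A₁ ^ 2) + 2) * (log s + 1)) := by gcongr
    _ = _ := by field_simp; ring

theorem exists_pieces (h : PhaseRegime a a' F φ A₁ A₂ A₃ α b T) :
    ∃ (τ : ℕ → ℝ) (δ C : ℝ), 0 < δ ∧ 3 ≤ τ 0 ∧
      (∀ k, δ ≤ τ (k + 1) - τ k ∧ τ (k + 1) ≤ 2 * τ k) ∧
      ∀ k, ∀ t ∈ Icc (τ k) (τ (k + 1)), |φ t - φ (τ k)| ≤ C * (log (τ k) + 1) / τ k ^ 2 := by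
  have hb := h.pos_b
  have hcont : ContinuousOn (fun t => b * t + φ t) (Ici T) := fun t ht =>
    ((continuous_const_mul b).continuousAt.add (h.hasDerivAt t ht).continuousAt).continuousWithinAt
  obtain ⟨m, hm⟩ := exists_nat_ge ((b * T + φ T) / π + 1)
  -- on the `k`-th piece the phase runs between the zeros `(m + k) π ∓ π / 2` of `cos`
  obtain ⟨τ, hτ⟩ := exists_hitting_times (θ₀ := m * π - π / 2) (δ := π) (c := b / 2)
    (d := 3 * b / 2) (by positivity) pi_pos hcont (fun t₁ t₂ ht₁ ht => h.phase_sub_bounds ht₁ ht)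
    (by linarith [pi_pos, (div_le_iff₀ pi_pos).1 (show (b * T + φ T) / π ≤ m - 1 by linarith)])
  have hdouble : ∀ k, τ (k + 1) ≤ 2 * τ k := fun k => by
    have := (hτ k).2.2.1
    have := h.two_pi_div_le
    rw [div_le_iff₀ hb] at this
    nlinarith [(hτ k).1]
  refine ⟨τ, 2 * π / (3 * b), _, by positivity, h.three_le.trans (hτ 0).1,
    fun k => ⟨?_, hdouble k⟩, fun k t ht => h.abs_sub_le_of_sign_cos (σ := (-1) ^ (m + k))
      (hτ k).1 ht.1 (ht.2.trans (hdouble k)) (by simp) fun r hr => ?_⟩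
  · rw [div_le_iff₀ (by positivity)]; linarith [(hτ k).2.1]
  · have := (hτ k).2.2.2 r ⟨hr.1, hr.2.trans ht.2⟩
    refine neg_one_pow_mul_cos_nonneg (m + k) ⟨?_, ?_⟩ <;> push_cast <;> linarith [this.1, this.2]

end PhaseRegime

theorem phase_converges_general (a a' F φ : ℝ → ℝ) (A₁ A₂ A₃ α b : ℝ)
    (hA₁ : 0 < A₁) (hα : 0 < α) (hb : 0 < b)
    (hbounds : ∀ t, A₁ ≤ a t ∧ a t ≤ A₂ ∧ |a' t| ≤ A₃)
    (hFasym : ∃ C T : ℝ, ∀ t ≥ T, |F t - α * t| ≤ C * Real.log t ^ 2)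
    (hφ : ∃ T₀ : ℝ, ∀ t ≥ T₀, HasDerivAt φ
        (-(a t * a' t * Real.cos (b * t + φ t)) /
          (Real.sqrt (F t ^ 2 - a t ^ 2) *
            (F t + Real.sqrt (F t ^ 2 - a t ^ 2) * Real.sin (b * t + φ t)))) t) :
    ∃ φinf : ℝ, Filter.Tendsto φ Filter.atTop (nhds φinf) ∧
      ∃ C' T' : ℝ, ∀ t ≥ T', |φ t - φinf| ≤ C' * Real.log t / t := by
  obtain ⟨T, h⟩ := exists_phaseRegime a a' F φ A₁ A₂ A₃ α b hA₁ hα hb hbounds hFasym hφ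
  obtain ⟨τ, δ, C, hδ, hτ₀, hτ, hosc⟩ := h.exists_pieces
  obtain ⟨L, C', hL⟩ := exists_abs_sub_le_mul_log_div hδ hτ₀ hτ hosc
  exact ⟨L, tendsto_of_abs_sub_le_mul_log_div hL, C', τ 0, hL⟩

/-- If `a` is `C¹` with `0 < A₁ ≤ a ≤ A₂`, `|a'| ≤ A₃`, `F` is continuous with
`F(t) = αt + O(log(t)²)` (`α > 0`), and `φ` solves
`φ' = −a a' cos(bt+φ)/(√(F²−a²)(F + √(F²−a²) sin(bt+φ)))` near `+∞`, then
`φ(t)` has a finite limit `φ(∞)` and `φ(t) = φ(∞) + O(log t / t)`. -/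
theorem phase_converges (a a' F φ : ℝ → ℝ) (A₁ A₂ A₃ α b : ℝ)
    (hA₁ : 0 < A₁) (hα : 0 < α) (hb : 0 < b)
    (ha : ∀ t, HasDerivAt a (a' t) t)
    (hbounds : ∀ t, A₁ ≤ a t ∧ a t ≤ A₂ ∧ |a' t| ≤ A₃)
    (hF : Continuous F)
    (hFasym : ∃ C T : ℝ, ∀ t ≥ T, |F t - α * t| ≤ C * Real.log t ^ 2)
    (hφ : ∃ T₀ : ℝ, ∀ t ≥ T₀, HasDerivAt φ
        (-(a t * a' t * Real.cos (b * t + φ t)) /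
          (Real.sqrt (F t ^ 2 - a t ^ 2) *
            (F t + Real.sqrt (F t ^ 2 - a t ^ 2) * Real.sin (b * t + φ t)))) t) :
    ∃ φinf : ℝ, Filter.Tendsto φ Filter.atTop (nhds φinf) ∧
      ∃ C' T' : ℝ, ∀ t ≥ T', |φ t - φinf| ≤ C' * Real.log t / t :=
  phase_converges_general a a' F φ A₁ A₂ A₃ α b hA₁ hα hb hbounds hFasym hφ
end
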